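/- arXiv:2205.06875 — 10 statements merged into one kernel-verified Lean document; each statement's English description precedes it below -/
import Mathlib

section
/- Let 𝓕 be a collection of subsets of S, each of size at least 2. Then 𝓕 is a forest on S if and only if the elements of M(𝓕) are pairwise disjoint and, for every T ∈ 𝓕, the elements of M(𝓕, T) are pairwise disjoint. -/
variable {α : Type*} [DecidableEq α]

/-- The set of inclusion-maximal elements of a collection `L` of finite sets. -/
def maxSet (L : Finset (Finset α)) : Finset (Finset α) :=
  L.filter fun T => ∀ U ∈ L, ¬ T ⊂ U

/-- The set of elements of `L` that are maximal in `L` under `T`. -/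
def maxUnder (L : Finset (Finset α)) (T : Finset α) : Finset (Finset α) :=
  L.filter fun U => U ⊂ T ∧ ∀ V ∈ L, ¬ (U ⊂ V ∧ V ⊂ T)

/-- A forest on `S`: a collection of subsets of `S`, each of size at least 2,
any two of which are nested or disjoint. -/
def IsForest (S : Finset α) (F : Finset (Finset α)) : Prop :=
  (∀ T ∈ F, T ⊆ S) ∧ (∀ T ∈ F, 2 ≤ T.card) ∧
    ∀ U ∈ F, ∀ T ∈ F, U ⊆ T ∨ T ⊆ U ∨ U ∩ T = ∅

/-- A collection `F` of subsets of `S`, each of size at least 2, is a forest iff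
the maximal elements `M(F)` are pairwise disjoint and, for every `T ∈ F`, the
elements of `M(F, T)` are pairwise disjoint. -/
theorem stmt1 (S : Finset α) (F : Finset (Finset α))
    (hS : ∀ T ∈ F, T ⊆ S) (h2 : ∀ T ∈ F, 2 ≤ T.card) :
    IsForest S F ↔
      ((∀ U ∈ maxSet F, ∀ V ∈ maxSet F, U ≠ V → U ∩ V = ∅) ∧
        ∀ T ∈ F, ∀ U ∈ maxUnder F T, ∀ V ∈ maxUnder F T, U ≠ V → U ∩ V = ∅) := by
  constructor
  · rintro ⟨-, -, hnest⟩
    constructor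
    · intro U hU V hV hne
      simp only [maxSet, Finset.mem_filter] at hU hV
      rcases hnest U hU.1 V hV.1 with h | h | h
      · exact absurd (Finset.ssubset_iff_subset_ne.mpr ⟨h, hne⟩) (hU.2 V hV.1)
      · exact absurd (Finset.ssubset_iff_subset_ne.mpr ⟨h, hne.symm⟩) (hV.2 U hU.1)
      · exact h
    · intro T hT U hU V hV hne
      simp only [maxUnder, Finset.mem_filter] at hU hV
      rcases hnest U hU.1 V hV.1 with h | h | h
      · exact absurd ⟨Finset.ssubset_iff_subset_ne.mpr ⟨h, hne⟩, hV.2.1⟩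
          (hU.2.2 V hV.1)
      · exact absurd ⟨Finset.ssubset_iff_subset_ne.mpr ⟨h, hne.symm⟩, hU.2.1⟩
          (hV.2.2 U hU.1)
      · exact h
  · rintro ⟨hmax, hunder⟩
    refine ⟨hS, h2, ?_⟩
    -- every element of F lies inside a maximal element
    have hex : ∀ X ∈ F, ∃ M ∈ maxSet F, X ⊆ M := by
      intro X hX
      obtain ⟨M, hM, hm⟩ := Finset.exists_max_image
        (F.filter fun T => X ⊆ T) Finset.card ⟨X, by simp [hX]⟩
      simp only [Finset.mem_filter] at hM
      refine ⟨M, ?_, hM.2⟩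
      simp only [maxSet, Finset.mem_filter]
      refine ⟨hM.1, fun U hU hsub => ?_⟩
      have := hm U (Finset.mem_filter.mpr ⟨hU, hM.2.trans hsub.subset⟩)
      exact absurd this (not_le.mpr (Finset.card_lt_card hsub))
    -- every element strictly under W lies inside an element of maxUnder F W
    have hexu : ∀ W ∈ F, ∀ X ∈ F, X ⊂ W → ∃ A ∈ maxUnder F W, X ⊆ A := by
      intro W hW X hX hXW
      obtain ⟨A, hA, hm⟩ := Finset.exists_max_image
        (F.filter fun T => X ⊆ T ∧ T ⊂ W) Finset.card
        ⟨X, by simp [hX, hXW]⟩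
      simp only [Finset.mem_filter] at hA
      refine ⟨A, ?_, hA.2.1⟩
      simp only [maxUnder, Finset.mem_filter]
      refine ⟨hA.1, hA.2.2, fun V hV ⟨hAV, hVW⟩ => ?_⟩
      have := hm V (Finset.mem_filter.mpr ⟨hV, hA.2.1.trans hAV.subset, hVW⟩)
      exact absurd this (not_le.mpr (Finset.card_lt_card hAV))
    -- main claim by strong induction on the cardinality of an ambient set W
    have key : ∀ n : ℕ, ∀ W ∈ F, W.card = n → ∀ U ∈ F, U ⊆ W → ∀ T ∈ F, T ⊆ W →
        U ⊆ T ∨ T ⊆ U ∨ U ∩ T = ∅ := by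
      intro n
      induction n using Nat.strong_induction_on with
      | _ n ih =>
        intro W hW hWn U hU hUW T hT hTW
        rcases eq_or_ne U W with rfl | hUne
        · exact Or.inr (Or.inl hTW)
        rcases eq_or_ne T W with rfl | hTne
        · exact Or.inl hUW
        obtain ⟨A, hA, hUA⟩ := hexu W hW U hU (Finset.ssubset_iff_subset_ne.mpr ⟨hUW, hUne⟩)
        obtain ⟨B, hB, hTB⟩ := hexu W hW T hT (Finset.ssubset_iff_subset_ne.mpr ⟨hTW, hTne⟩)
        rcases eq_or_ne A B with rfl | hAB
        · have hAF : A ∈ F := (Finset.mem_filter.mp hA).1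
          have hAW : A ⊂ W := (Finset.mem_filter.mp hA).2.1
          exact ih A.card (hWn ▸ Finset.card_lt_card hAW) A hAF rfl U hU hUA T hT hTB
        · have := hunder W hW A hA B hB hAB
          refine Or.inr (Or.inr (Finset.eq_empty_of_forall_notMem fun x hx => ?_))
          have hx' : x ∈ A ∩ B := Finset.mem_inter.mpr
            ⟨hUA (Finset.mem_inter.mp hx).1, hTB (Finset.mem_inter.mp hx).2⟩
          simp [this] at hx'
    intro U hU T hT
    obtain ⟨MU, hMU, hUMU⟩ := hex U hU
    obtain ⟨MT, hMT, hTMT⟩ := hex T hT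
    rcases eq_or_ne MU MT with rfl | hne
    · exact key MU.card MU (Finset.mem_filter.mp hMU).1 rfl U hU hUMU T hT hTMT
    · have := hmax MU hMU MT hMT hne
      refine Or.inr (Or.inr (Finset.eq_empty_of_forall_notMem fun x hx => ?_))
      have hx' : x ∈ MU ∩ MT := Finset.mem_inter.mpr
        ⟨hUMU (Finset.mem_inter.mp hx).1, hTMT (Finset.mem_inter.mp hx).2⟩
      simp [this] at hx'
end

section
/- For every forest 𝓕 on S: Σ_{T ∈ 𝓕} m(𝓕, T) = (Σ_{T ∈ M(𝓕)} |T|) − |M(𝓕)|, and Σ_{T ∈ 𝓕} n(𝓕, T) = (Σ_{T ∈ M(𝓕)} |T|) + |𝓕| − 2·|M(𝓕)|. -/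
variable {α : Type*} [DecidableEq α]

/-- `m(F, T) = (|T| - 1) - Σ_{U ∈ M(F,T)} (|U| - 1)`. -/
def mNum (F : Finset (Finset α)) (T : Finset α) : ℤ :=
  ((T.card : ℤ) - 1) - ∑ U ∈ maxUnder F T, ((U.card : ℤ) - 1)

/-- `n(F, T) = (|T| - 1) - Σ_{U ∈ M(F,T)} (|U| - 2)`. -/
def nNum (F : Finset (Finset α)) (T : Finset α) : ℤ :=
  ((T.card : ℤ) - 1) - ∑ U ∈ maxUnder F T, ((U.card : ℤ) - 2)

lemma mem_maxUnder {L : Finset (Finset α)} {T U : Finset α} :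
    U ∈ maxUnder L T ↔ U ∈ L ∧ U ⊂ T ∧ ∀ V ∈ L, ¬ (U ⊂ V ∧ V ⊂ T) := by
  simp [maxUnder]

lemma biUnion_maxUnder {S : Finset α} {F : Finset (Finset α)} (hF : IsForest S F) :
    F.biUnion (maxUnder F) = F \ maxSet F := by
  ext U
  simp only [Finset.mem_biUnion, Finset.mem_sdiff, maxSet, Finset.mem_filter, mem_maxUnder]
  constructor
  · rintro ⟨T, hT, hUF, hUT, -⟩
    exact ⟨hUF, fun h => (h.2 T hT) hUT⟩
  · rintro ⟨hUF, h⟩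
    push_neg at h
    obtain ⟨T0, hT0, hUT0⟩ := h hUF
    -- take a minimal-cardinality element of F strictly above U
    obtain ⟨T, hT, hmin⟩ := (F.filter fun V => U ⊂ V).exists_min_image Finset.card
      ⟨T0, Finset.mem_filter.2 ⟨hT0, hUT0⟩⟩
    rw [Finset.mem_filter] at hT
    refine ⟨T, hT.1, hUF, hT.2, fun V hV ⟨hUV, hVT⟩ => ?_⟩
    have := hmin V (Finset.mem_filter.2 ⟨hV, hUV⟩)
    exact absurd (Finset.card_lt_card hVT) (not_lt.2 this)

lemma pairwise_disjoint_maxUnder {S : Finset α} {F : Finset (Finset α)} (hF : IsForest S F) :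
    (↑F : Set (Finset α)).PairwiseDisjoint (maxUnder F) := by
  intro T1 h1 T2 h2 hne
  simp only [Function.onFun]
  rw [Finset.disjoint_left]
  intro U hU1 hU2
  rw [mem_maxUnder] at hU1 hU2
  obtain ⟨hUF, hUT1, hmax1⟩ := hU1
  obtain ⟨-, hUT2, hmax2⟩ := hU2
  have hUcard := hF.2.1 U hUF
  have hUne : U.Nonempty := Finset.card_pos.1 (by omega)
  have hint : T1 ∩ T2 ≠ ∅ := by
    intro h
    obtain ⟨x, hx⟩ := hUne
    have : x ∈ T1 ∩ T2 := Finset.mem_inter.2 ⟨hUT1.1 hx, hUT2.1 hx⟩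
    simp [h] at this
  rcases hF.2.2 T1 h1 T2 h2 with h | h | h
  · exact hmax2 T1 h1 ⟨hUT1, Finset.ssubset_iff_subset_ne.2 ⟨h, hne⟩⟩
  · exact hmax1 T2 h2 ⟨hUT2, Finset.ssubset_iff_subset_ne.2 ⟨h, hne.symm⟩⟩
  · exact hint h

lemma key_sum {S : Finset α} {F : Finset (Finset α)} (hF : IsForest S F)
    (f : Finset α → ℤ) :
    ∑ T ∈ F, ∑ U ∈ maxUnder F T, f U = ∑ U ∈ F \ maxSet F, f U := by
  rw [← Finset.sum_biUnion (pairwise_disjoint_maxUnder hF), biUnion_maxUnder hF]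

/-- For every forest `F` on `S`:
`Σ_{T ∈ F} m(F, T) = (Σ_{T ∈ M(F)} |T|) − |M(F)|` and
`Σ_{T ∈ F} n(F, T) = (Σ_{T ∈ M(F)} |T|) + |F| − 2·|M(F)|`. -/
theorem stmt3 (S : Finset α) (F : Finset (Finset α)) (hF : IsForest S F) :
    (∑ T ∈ F, mNum F T = (∑ T ∈ maxSet F, (T.card : ℤ)) - (maxSet F).card) ∧
    (∑ T ∈ F, nNum F T
      = (∑ T ∈ maxSet F, (T.card : ℤ)) + F.card - 2 * (maxSet F).card) := by
  have hsub : maxSet F ⊆ F := Finset.filter_subset _ _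
  have hsplit : ∀ g : Finset α → ℤ,
      ∑ T ∈ F, g T = ∑ T ∈ F \ maxSet F, g T + ∑ T ∈ maxSet F, g T :=
    fun g => (Finset.sum_sdiff hsub).symm
  have hcard : ((F \ maxSet F).card : ℤ) = F.card - (maxSet F).card := by
    rw [Finset.card_sdiff_of_subset hsub]
    have := Finset.card_le_card hsub
    omega
  constructor
  · unfold mNum
    rw [Finset.sum_sub_distrib, key_sum hF, hsplit (fun T => (T.card : ℤ) - 1)]
    simp only [Finset.sum_sub_distrib, Finset.sum_const, nsmul_eq_mul, mul_one]
    linarith [hcard]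
  · unfold nNum
    rw [Finset.sum_sub_distrib, key_sum hF, hsplit (fun T => (T.card : ℤ) - 1)]
    simp only [Finset.sum_sub_distrib, Finset.sum_const, nsmul_eq_mul, mul_one]
    linarith [hcard]
end

section
/- For every S-tree 𝓣, m(𝓣) = n(𝓣); that is, Σ_{𝓤 ⊆ 𝓣} ∏_{T ∈ 𝓤} (m(𝓤, T) − 1) = ∏_{T ∈ 𝓣} n(𝓣, T), where the summand for 𝓤 = ∅ is 1 (empty product). -/
/-!
Write `W(𝓤) = ∏_{T ∈ 𝓤} (m(𝓤, T) − 1)`, `m(𝓕) = Σ_{𝓤 ⊆ 𝓕} W(𝓤)` and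
`c_k(𝓤, R) = Σ_{V ∈ M(𝓤, R)} (|V| − k)`. Adjoining to `𝓕` a set `R` of maximal size, the factor
of `R` in `W(𝓤 ∪ {R})` is `|R| − 2 − c_1(𝓤, R)`, so
`m(𝓕 ∪ {R}) = (|R| − 1) m(𝓕) − Σ_{𝓤 ⊆ 𝓕} W(𝓤) c_1(𝓤, R)`, while
`n(𝓕 ∪ {R}, R) = |R| − 1 − c_2(𝓕, R)`. By induction on `𝓕` it therefore suffices that
`Σ_{𝓤 ⊆ 𝓕} W(𝓤) c_1(𝓤, R) = c_2(𝓕, R) m(𝓕)` whenever every member of `𝓕` lies in `R` or misses it.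
Both sides are additive over the trees of `𝓕`, because `W` is multiplicative over families of
pairwise incomparable sets, and for a single tree with root `R₁ ⊂ R` the identity already holds
term by term, whatever the tree below `R₁` looks like.
-/

variable {α : Type*} [DecidableEq α]

theorem Finset.sum_powerset_union_of_disjoint {β M : Type*} [DecidableEq β] [AddCommMonoid M]
    {s t : Finset β} (h : Disjoint s t) (f : Finset β → M) :
    ∑ u ∈ (s ∪ t).powerset, f u = ∑ x ∈ s.powerset, ∑ y ∈ t.powerset, f (x ∪ y) := by
  rw [← Finset.sum_product']
  refine Finset.sum_nbij' (fun u => (u ∩ s, u ∩ t)) (fun p => p.1 ∪ p.2) ?_ ?_ ?_ ?_ ?_ <;>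
    simp only [Finset.mem_powerset, Finset.mem_product, Prod.forall]
  · exact fun u _ => ⟨Finset.inter_subset_right, Finset.inter_subset_right⟩
  · exact fun x y hxy => Finset.union_subset_union hxy.1 hxy.2
  · intro u hu
    rw [← Finset.inter_union_distrib_left, Finset.inter_eq_left.mpr hu]
  · intro x y hxy
    rw [Finset.union_inter_distrib_right, Finset.union_inter_distrib_right,
      Finset.inter_eq_left.mpr hxy.1, Finset.inter_eq_left.mpr hxy.2,
      Finset.disjoint_iff_inter_eq_empty.mp (h.mono_left hxy.1),
      Finset.disjoint_iff_inter_eq_empty.mp (h.symm.mono_left hxy.2),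
      Finset.union_empty, Finset.empty_union]
  · intro u hu
    rw [← Finset.inter_union_distrib_left, Finset.inter_eq_left.mpr hu]

section MaxUnder

variable {L L₁ L₂ : Finset (Finset α)} {R R₁ T : Finset α}

theorem maxUnder_union_of_forall_not_ssubset (h : ∀ V ∈ L₂, ¬ V ⊂ T) :
    maxUnder (L₁ ∪ L₂) T = maxUnder L₁ T := by
  ext U
  simp only [maxUnder, Finset.mem_filter, Finset.mem_union]
  grind

theorem maxUnder_insert_of_not_ssubset (h : ¬ R ⊂ T) :
    maxUnder (insert R L) T = maxUnder L T := by
  rw [Finset.insert_eq, Finset.union_comm]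
  exact maxUnder_union_of_forall_not_ssubset (by simpa using h)

theorem maxUnder_union_of_incomparable (h : ∀ U ∈ L₁, ∀ V ∈ L₂, ¬ U ⊂ V ∧ ¬ V ⊂ U) :
    maxUnder (L₁ ∪ L₂) T = maxUnder L₁ T ∪ maxUnder L₂ T := by
  ext U
  simp only [maxUnder, Finset.mem_filter, Finset.mem_union]
  grind

theorem maxUnder_eq_empty (h : ∀ U ∈ L, ¬ U ⊂ T) : maxUnder L T = ∅ :=
  Finset.filter_false_of_mem fun U hU hc => h U hU hc.1

theorem maxUnder_of_forall_ssubset (h₁ : ∀ U ∈ L, U ⊂ R₁) (h₂ : R₁ ⊆ R) :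
    maxUnder L R = maxUnder L R₁ := by
  ext U
  simp only [maxUnder, Finset.mem_filter]
  grind [ssubset_of_ssubset_of_subset]

theorem maxUnder_insert_of_forall_ssubset (h₁ : ∀ U ∈ L, U ⊂ R₁) (h₂ : R₁ ⊂ R) :
    maxUnder (insert R₁ L) R = {R₁} := by
  ext U
  simp only [maxUnder, Finset.mem_filter, Finset.mem_insert, Finset.mem_singleton]
  grind [ssubset_asymm, ssubset_irrefl]

end MaxUnder

def IsLaminar {β : Type*} (F : Finset (Finset β)) : Prop :=
  (∀ T ∈ F, T.Nonempty) ∧ ∀ U ∈ F, ∀ T ∈ F, U ⊆ T ∨ T ⊆ U ∨ Disjoint U T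

def childSum (k : ℤ) (L : Finset (Finset α)) (T : Finset α) : ℤ :=
  ∑ U ∈ maxUnder L T, ((U.card : ℤ) - k)

def weight (U : Finset (Finset α)) : ℤ :=
  ∏ T ∈ U, (mNum U T - 1)

/-- The paper's `m(𝓕)`. -/
def weightSum (F : Finset (Finset α)) : ℤ :=
  ∑ U ∈ F.powerset, weight U

theorem mNum_eq_sub_childSum (L : Finset (Finset α)) (T : Finset α) :
    mNum L T = T.card - 1 - childSum 1 L T := rfl

theorem nNum_eq_sub_childSum (L : Finset (Finset α)) (T : Finset α) :
    nNum L T = T.card - 1 - childSum 2 L T := rfl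

section ChildSum

variable {k : ℤ} {L L₁ L₂ : Finset (Finset α)} {R R₁ T : Finset α}

theorem childSum_insert_of_not_ssubset (h : ¬ R ⊂ T) :
    childSum k (insert R L) T = childSum k L T := by
  rw [childSum, maxUnder_insert_of_not_ssubset h, childSum]

theorem mNum_insert_of_not_ssubset (h : ¬ R ⊂ T) : mNum (insert R L) T = mNum L T := by
  rw [mNum_eq_sub_childSum, mNum_eq_sub_childSum, childSum_insert_of_not_ssubset h]

theorem nNum_insert_of_not_ssubset (h : ¬ R ⊂ T) : nNum (insert R L) T = nNum L T := by
  rw [nNum_eq_sub_childSum, nNum_eq_sub_childSum, childSum_insert_of_not_ssubset h]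

theorem childSum_union_of_incomparable (hd : Disjoint L₁ L₂)
    (h : ∀ U ∈ L₁, ∀ V ∈ L₂, ¬ U ⊂ V ∧ ¬ V ⊂ U) :
    childSum k (L₁ ∪ L₂) T = childSum k L₁ T + childSum k L₂ T := by
  rw [childSum, maxUnder_union_of_incomparable h, Finset.sum_union]
  · rfl
  · exact hd.mono (Finset.filter_subset _ _) (Finset.filter_subset _ _)

theorem childSum_eq_zero (h : ∀ U ∈ L, ¬ U ⊂ T) : childSum k L T = 0 := by
  rw [childSum, maxUnder_eq_empty h, Finset.sum_empty]

theorem childSum_of_forall_ssubset (h₁ : ∀ U ∈ L, U ⊂ R₁) (h₂ : R₁ ⊆ R) :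
    childSum k L R = childSum k L R₁ := by
  rw [childSum, maxUnder_of_forall_ssubset h₁ h₂, childSum]

theorem childSum_insert_of_forall_ssubset (h₁ : ∀ U ∈ L, U ⊂ R₁) (h₂ : R₁ ⊂ R) :
    childSum k (insert R₁ L) R = R₁.card - k := by
  rw [childSum, maxUnder_insert_of_forall_ssubset h₁ h₂, Finset.sum_singleton]

end ChildSum

section Weight

variable {U F A B : Finset (Finset α)} {R : Finset α}

theorem weight_insert (hR : R ∉ U) (h : ∀ T ∈ U, ¬ R ⊂ T) :
    weight (insert R U) = (R.card - 2 - childSum 1 U R) * weight U := by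
  rw [weight, Finset.prod_insert hR, Finset.prod_congr rfl fun T hT => by
    rw [mNum_insert_of_not_ssubset (h T hT)], mNum_eq_sub_childSum,
    childSum_insert_of_not_ssubset (ssubset_irrefl R), weight]
  ring

theorem weight_union_of_incomparable (hd : Disjoint A B)
    (h : ∀ U ∈ A, ∀ V ∈ B, ¬ U ⊂ V ∧ ¬ V ⊂ U) :
    weight (A ∪ B) = weight A * weight B := by
  rw [weight, Finset.prod_union hd, weight, weight]
  congr 1
  · refine Finset.prod_congr rfl fun T hT => ?_
    rw [mNum, maxUnder_union_of_forall_not_ssubset fun V hV => (h T hT V hV).2, mNum]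
  · refine Finset.prod_congr rfl fun T hT => ?_
    rw [mNum, Finset.union_comm, maxUnder_union_of_forall_not_ssubset fun V hV => (h V hV T hT).1,
      mNum]

theorem weightSum_insert (hR : R ∉ F) (h : ∀ T ∈ F, ¬ R ⊂ T) :
    weightSum (insert R F) =
      (R.card - 1) * weightSum F - ∑ U ∈ F.powerset, weight U * childSum 1 U R := by
  rw [weightSum, Finset.sum_powerset_insert hR, ← Finset.sum_add_distrib, weightSum,
    Finset.mul_sum, ← Finset.sum_sub_distrib]
  refine Finset.sum_congr rfl fun U hU => ?_
  have hU := Finset.mem_powerset.mp hU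
  rw [weight_insert (fun hRU => hR (hU hRU)) fun T hT => h T (hU hT)]
  ring

theorem weightSum_union_of_incomparable (hd : Disjoint A B)
    (h : ∀ U ∈ A, ∀ V ∈ B, ¬ U ⊂ V ∧ ¬ V ⊂ U) :
    weightSum (A ∪ B) = weightSum A * weightSum B := by
  rw [weightSum, Finset.sum_powerset_union_of_disjoint hd, weightSum, weightSum, Finset.sum_mul_sum]
  refine Finset.sum_congr rfl fun X hX => Finset.sum_congr rfl fun Y hY => ?_
  have hX := Finset.mem_powerset.mp hX
  have hY := Finset.mem_powerset.mp hY
  exact weight_union_of_incomparable (hd.mono hX hY) fun U hU V hV => h U (hX hU) V (hY hV)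

end Weight

section KeyIdentity

variable {F A B : Finset (Finset α)} {R R₁ : Finset α}

theorem sum_weight_mul_childSum_of_forall_not_ssubset (h : ∀ T ∈ F, ¬ T ⊂ R) :
    ∑ U ∈ F.powerset, weight U * childSum 1 U R = childSum 2 F R * weightSum F := by
  rw [childSum_eq_zero h, zero_mul]
  refine Finset.sum_eq_zero fun U hU => ?_
  rw [childSum_eq_zero fun T hT => h T (Finset.mem_powerset.mp hU hT), mul_zero]

theorem sum_weight_mul_childSum_insert_of_forall_ssubset (h₁ : ∀ T ∈ F, T ⊂ R₁) (h₂ : R₁ ⊂ R) :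
    ∑ U ∈ (insert R₁ F).powerset, weight U * childSum 1 U R =
      childSum 2 (insert R₁ F) R * weightSum (insert R₁ F) := by
  have hR₁ : R₁ ∉ F := fun h => ssubset_irrefl R₁ (h₁ R₁ h)
  have hnot : ∀ T ∈ F, ¬ R₁ ⊂ T := fun T hT => ssubset_asymm (h₁ T hT)
  rw [weightSum_insert hR₁ hnot, childSum_insert_of_forall_ssubset h₁ h₂, weightSum,
    Finset.mul_sum, ← Finset.sum_sub_distrib, Finset.mul_sum, Finset.sum_powerset_insert hR₁,
    ← Finset.sum_add_distrib]
  refine Finset.sum_congr rfl fun U hU => ?_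
  have hU₁ : ∀ T ∈ U, T ⊂ R₁ := fun T hT => h₁ T (Finset.mem_powerset.mp hU hT)
  rw [weight_insert (fun h => ssubset_irrefl R₁ (hU₁ R₁ h)) fun T hT => ssubset_asymm (hU₁ T hT),
    childSum_insert_of_forall_ssubset hU₁ h₂, childSum_of_forall_ssubset hU₁ h₂.subset]
  ring

theorem sum_weight_mul_childSum_union_of_incomparable (hd : Disjoint A B)
    (h : ∀ U ∈ A, ∀ V ∈ B, ¬ U ⊂ V ∧ ¬ V ⊂ U)
    (hA : ∑ U ∈ A.powerset, weight U * childSum 1 U R = childSum 2 A R * weightSum A)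
    (hB : ∑ U ∈ B.powerset, weight U * childSum 1 U R = childSum 2 B R * weightSum B) :
    ∑ U ∈ (A ∪ B).powerset, weight U * childSum 1 U R =
      childSum 2 (A ∪ B) R * weightSum (A ∪ B) := by
  have hsplit : ∀ X ∈ A.powerset, ∀ Y ∈ B.powerset, weight (X ∪ Y) * childSum 1 (X ∪ Y) R =
      weight X * childSum 1 X R * weight Y + weight X * (weight Y * childSum 1 Y R) := by
    intro X hX Y hY
    have hX := Finset.mem_powerset.mp hX
    have hY := Finset.mem_powerset.mp hY
    have hXY : ∀ U ∈ X, ∀ V ∈ Y, ¬ U ⊂ V ∧ ¬ V ⊂ U := fun U hU V hV => h U (hX hU) V (hY hV)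
    rw [weight_union_of_incomparable (hd.mono hX hY) hXY,
      childSum_union_of_incomparable (hd.mono hX hY) hXY]
    ring
  rw [Finset.sum_powerset_union_of_disjoint hd,
    Finset.sum_congr rfl fun X hX => Finset.sum_congr rfl (hsplit X hX),
    Finset.sum_congr rfl fun X _ => Finset.sum_add_distrib, Finset.sum_add_distrib,
    ← Finset.sum_mul_sum, ← Finset.sum_mul_sum, hA, hB, childSum_union_of_incomparable hd h,
    weightSum_union_of_incomparable hd h, ← weightSum, ← weightSum]
  ring

end KeyIdentity

namespace IsLaminar

variable {β : Type*} {F G : Finset (Finset β)} {R T : Finset β}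

theorem mono (hF : IsLaminar F) (h : G ⊆ F) : IsLaminar G :=
  ⟨fun T hT => hF.1 T (h hT), fun U hU T hT => hF.2 U (h hU) T (h hT)⟩

theorem not_subset_of_disjoint (hF : IsLaminar F) (hT : T ∈ F) (h : Disjoint T R) : ¬ T ⊆ R :=
  fun hTR => (hF.1 T hT).ne_empty (h.eq_bot_of_le hTR)

theorem subset_or_disjoint_of_card_le (hF : IsLaminar F) (hT : T ∈ F) (hR : R ∈ F)
    (hcard : T.card ≤ R.card) : T ⊆ R ∨ Disjoint T R := by
  rcases hF.2 T hT R hR with h | h | h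
  · exact .inl h
  · exact .inl (Finset.eq_of_subset_of_card_le h hcard).ge
  · exact .inr h

theorem incomparable_filter_subset_filter_not_subset [DecidableEq β] (hF : IsLaminar F)
    (hR : R ∈ F) (hmax : ∀ T ∈ F, T.card ≤ R.card) :
    ∀ U ∈ F.filter (· ⊆ R), ∀ V ∈ F.filter (¬ · ⊆ R), ¬ U ⊂ V ∧ ¬ V ⊂ U := by
  simp only [Finset.mem_filter]
  rintro U ⟨hU, hUR⟩ V ⟨hV, hVR⟩
  refine ⟨fun hUV => ?_, fun hVU => hVR (hVU.subset.trans hUR)⟩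
  rcases hF.subset_or_disjoint_of_card_le hV hR (hmax V hV) with h | h
  · exact hVR h
  · exact hF.not_subset_of_disjoint hU (h.mono_left hUV.subset) hUR

end IsLaminar

theorem sum_weight_mul_childSum {F : Finset (Finset α)} (hF : IsLaminar F) {R : Finset α}
    (hR : ∀ T ∈ F, T ⊂ R ∨ Disjoint T R) :
    ∑ U ∈ F.powerset, weight U * childSum 1 U R = childSum 2 F R * weightSum F := by
  induction F using Finset.strongInduction with
  | H F ih =>
  rcases F.eq_empty_or_nonempty with rfl | hne
  · exact sum_weight_mul_childSum_of_forall_not_ssubset (by simp)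
  obtain ⟨R₁, hR₁, hmax⟩ := F.exists_max_image Finset.card hne
  have hR₁F₁ : R₁ ∈ F.filter (· ⊆ R₁) := Finset.mem_filter.mpr ⟨hR₁, subset_rfl⟩
  have htree : ∑ U ∈ (F.filter (· ⊆ R₁)).powerset, weight U * childSum 1 U R =
      childSum 2 (F.filter (· ⊆ R₁)) R * weightSum (F.filter (· ⊆ R₁)) := by
    rcases hR R₁ hR₁ with h | h
    · rw [← Finset.insert_erase hR₁F₁]
      refine sum_weight_mul_childSum_insert_of_forall_ssubset (fun T hT => ?_) h
      obtain ⟨hne, hT⟩ := Finset.mem_erase.mp hT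
      exact (Finset.mem_filter.mp hT).2.ssubset_of_ne hne
    · refine sum_weight_mul_childSum_of_forall_not_ssubset fun T hT hTR => ?_
      obtain ⟨hT, hTR₁⟩ := Finset.mem_filter.mp hT
      exact hF.not_subset_of_disjoint hT (h.mono_left hTR₁) hTR.subset
  have hF₂ : F.filter (¬ · ⊆ R₁) ⊂ F :=
    Finset.filter_ssubset.mpr ⟨R₁, hR₁, not_not.mpr subset_rfl⟩
  rw [← Finset.filter_union_filter_not_eq (· ⊆ R₁) F]
  exact sum_weight_mul_childSum_union_of_incomparable (Finset.disjoint_filter_filter_not _ _ _)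
    (hF.incomparable_filter_subset_filter_not_subset hR₁ hmax) htree
    (ih _ hF₂ (hF.mono hF₂.subset) fun T hT => hR T (hF₂.subset hT))

theorem weightSum_eq_prod_nNum {F : Finset (Finset α)} (hF : IsLaminar F) :
    weightSum F = ∏ T ∈ F, nNum F T := by
  revert hF
  refine Finset.induction_on_max_value Finset.card F (fun _ => by simp [weightSum, weight])
    fun R F hR hmax ih hF => ?_
  have hF' := hF.mono (Finset.subset_insert R F)
  have hnot : ∀ T ∈ F, ¬ R ⊂ T := fun T hT hRT => (Finset.card_lt_card hRT).not_ge (hmax T hT)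
  have hbelow : ∀ T ∈ F, T ⊂ R ∨ Disjoint T R := fun T hT =>
    (hF.subset_or_disjoint_of_card_le (Finset.mem_insert_of_mem hT) (Finset.mem_insert_self R F)
      (hmax T hT)).imp_left fun h => h.ssubset_of_ne fun hTR => hR (hTR ▸ hT)
  rw [weightSum_insert hR hnot, sum_weight_mul_childSum hF' hbelow, ih hF', Finset.prod_insert hR,
    Finset.prod_congr rfl fun T hT => nNum_insert_of_not_ssubset (hnot T hT),
    nNum_eq_sub_childSum, childSum_insert_of_not_ssubset (ssubset_irrefl R)]
  ring

theorem IsForest.isLaminar {S : Finset α} {F : Finset (Finset α)} (hF : IsForest S F) :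
    IsLaminar F :=
  ⟨fun T hT => Finset.card_pos.mp (by linarith [hF.2.1 T hT]),
    fun U hU T hT => (hF.2.2 U hU T hT).imp_right
      (Or.imp_right Finset.disjoint_iff_inter_eq_empty.mpr)⟩

theorem stmt5_general (S : Finset α) (Tr : Finset (Finset α))
    (hTr : IsForest S Tr) :
    ∑ Us ∈ Tr.powerset, ∏ T ∈ Us, (mNum Us T - 1) = ∏ T ∈ Tr, nNum Tr T :=
  weightSum_eq_prod_nNum hTr.isLaminar

/-- For every `S`-tree `𝓣`, `m(𝓣) = n(𝓣)`:
`Σ_{𝓤 ⊆ 𝓣} ∏_{T ∈ 𝓤} (m(𝓤, T) − 1) = ∏_{T ∈ 𝓣} n(𝓣, T)`. -/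
theorem stmt5 (S : Finset α) (Tr : Finset (Finset α))
    (hTr : IsForest S Tr) (hS : S ∈ Tr) :
    ∑ Us ∈ Tr.powerset, ∏ T ∈ Us, (mNum Us T - 1) = ∏ T ∈ Tr, nNum Tr T :=
  stmt5_general S Tr hTr
end

section
/- Let 𝓕 be a forest on S and T ∈ 𝓕 with M(𝓕, T) nonempty, and let π_{𝓕,T} : V_T → ⊕_{U ∈ M(𝓕,T)} V_U be the product of the restriction maps π_U^T. Then π_{𝓕,T} is surjective, its kernel has dimension m(𝓕, T), and for any family (M_U)_{U ∈ M(𝓕,T)} of one-dimensional subspaces M_U ≤ V_U, the preimage π_{𝓕,T}⁻¹(⊕_U M_U) has dimension n(𝓕, T). -/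
variable {α : Type*} [DecidableEq α]

noncomputable section

/-- The subspace of constant functions in `F(T, ℂ) = (T → ℂ)`. -/
def constSub (T : Finset α) : Submodule ℂ (↥T → ℂ) :=
  Submodule.span ℂ {fun _ => 1}

/-- `V_T = F(T, ℂ)/C_T`. -/
abbrev Vspace (T : Finset α) : Type _ := (↥T → ℂ) ⧸ constSub T

/-- Restriction of functions, as a linear map `F(T,ℂ) → F(U,ℂ)` for `U ⊆ T`. -/
def restr (U T : Finset α) (h : U ⊆ T) : (↥T → ℂ) →ₗ[ℂ] (↥U → ℂ) :=
  LinearMap.funLeft ℂ ℂ (fun u => ⟨u.1, h u.2⟩)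

/-- The induced map `π_U^T : V_T → V_U`. -/
def piUT (U T : Finset α) (h : U ⊆ T) : Vspace T →ₗ[ℂ] Vspace U :=
  Submodule.mapQ (constSub T) (constSub U) (restr U T h) (by
    rw [constSub, Submodule.span_le, Set.singleton_subset_iff, SetLike.mem_coe,
      Submodule.mem_comap]
    exact Submodule.subset_span rfl)

/-- The map `π_{F,T} : V_T → ⊕_{U ∈ M(F,T)} V_U`, the product of the restriction
maps `π_U^T`. -/
def piForest (F : Finset (Finset α)) (T : Finset α) :
    Vspace T →ₗ[ℂ] ((U : ↥(maxUnder F T)) → Vspace U.1) :=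
  LinearMap.pi fun U => piUT U.1 T (Finset.mem_filter.mp U.2).2.1.subset

/-!
The sets `U ∈ M(F,T)` are pairwise disjoint, so representatives of classes in the `V_U` glue to a
single function on `T`, and `π_{F,T}` is surjective. Rank–nullity with `dim V_U = |U| - 1` gives
`dim ker π_{F,T} = m(F,T)`, and the preimage of `⊕ M_U` under a surjection has dimension
`dim ker π_{F,T} + |M(F,T)| = n(F,T)`.
-/

section LinearAlgebra

variable {K A B : Type*} [DivisionRing K] [AddCommGroup A] [Module K A]
  [AddCommGroup B] [Module K B]

theorem LinearMap.finrank_comap_eq_add_finrank_ker [FiniteDimensional K A] {f : A →ₗ[K] B}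
    (hf : Function.Surjective f) (W : Submodule K B) :
    Module.finrank K (W.comap f) = Module.finrank K W + Module.finrank K (LinearMap.ker f) := by
  have : FiniteDimensional K B := Module.Finite.of_surjective f hf
  have hA := LinearMap.finrank_range_add_finrank_ker f
  have hg := LinearMap.finrank_range_add_finrank_ker (W.mkQ ∘ₗ f)
  rw [LinearMap.range_eq_top.2 hf, finrank_top] at hA
  rw [LinearMap.range_comp_of_range_eq_top _ (LinearMap.range_eq_top.2 hf), W.range_mkQ,
    finrank_top, LinearMap.ker_comp, Submodule.ker_mkQ] at hg
  have hW := W.finrank_quotient_add_finrank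
  omega

def Submodule.piUnivEquiv {R ι : Type*} [Semiring R] {M : ι → Type*}
    [∀ i, AddCommMonoid (M i)] [∀ i, Module R (M i)] (p : ∀ i, Submodule R (M i)) :
    Submodule.pi Set.univ p ≃ₗ[R] ((i : ι) → p i) where
  toFun x i := ⟨x.1 i, x.2 i (Set.mem_univ i)⟩
  invFun x := ⟨fun i => x i, fun i _ => (x i).2⟩
  map_add' _ _ := rfl
  map_smul' _ _ := rfl
  left_inv _ := rfl
  right_inv _ := rfl

theorem Submodule.finrank_pi_univ {ι : Type*} [Fintype ι] {M : ι → Type*}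
    [∀ i, AddCommGroup (M i)] [∀ i, Module K (M i)] (p : ∀ i, Submodule K (M i))
    [∀ i, FiniteDimensional K (p i)] :
    Module.finrank K (Submodule.pi Set.univ p) = ∑ i, Module.finrank K (p i) := by
  rw [(Submodule.piUnivEquiv p).finrank_eq, Module.finrank_pi_fintype]

end LinearAlgebra

theorem finrank_Vspace {β : Type*} {T : Finset β} (hT : T.Nonempty) :
    (Module.finrank ℂ (Vspace T) : ℤ) = T.card - 1 := by
  have hC : Module.finrank ℂ (constSub T) = 1 :=
    finrank_span_singleton fun h => by simpa using congrFun h ⟨_, hT.choose_spec⟩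
  rw [← Fintype.card_coe T, ← Module.finrank_pi ℂ, ← (constSub T).finrank_quotient_add_finrank,
    hC]
  push_cast
  ring

section Forest

variable {S : Finset α} {F : Finset (Finset α)}

theorem IsForest.nonempty (hF : IsForest S F) {T : Finset α} (hT : T ∈ F) : T.Nonempty :=
  Finset.card_pos.mp (by have := hF.2.1 T hT; omega)

theorem IsForest.disjoint_of_mem_maxUnder (hF : IsForest S F) {T U V : Finset α}
    (hU : U ∈ maxUnder F T) (hV : V ∈ maxUnder F T) (hUV : U ≠ V) : Disjoint U V := by
  obtain ⟨hUF, hUT, hUmax⟩ := Finset.mem_filter.mp hU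
  obtain ⟨hVF, hVT, hVmax⟩ := Finset.mem_filter.mp hV
  rcases hF.2.2 U hUF V hVF with h | h | h
  · exact (hUmax V hVF ⟨lt_of_le_of_ne h hUV, hVT⟩).elim
  · exact (hVmax U hUF ⟨lt_of_le_of_ne h hUV.symm, hUT⟩).elim
  · exact Finset.disjoint_iff_inter_eq_empty.mpr h

theorem piForest_surjective (hF : IsForest S F) (T : Finset α) :
    Function.Surjective (piForest F T) := by
  intro y
  choose g hg using fun U => Submodule.Quotient.mk_surjective _ (y U)
  let f : ↥T → ℂ := fun t => ∑ U : ↥(maxUnder F T), if h : t.1 ∈ U.1 then g U ⟨t.1, h⟩ else 0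
  refine ⟨Submodule.Quotient.mk f, funext fun U => ?_⟩
  rw [← hg U]
  refine congrArg Submodule.Quotient.mk (funext fun u => ?_)
  change f ⟨u.1, _⟩ = g U u
  refine (Finset.sum_eq_single U (fun V _ hVU => dif_neg fun hu => ?_) (by simp)).trans
    (dif_pos u.2)
  exact Finset.disjoint_left.mp
    (hF.disjoint_of_mem_maxUnder V.2 U.2 (Subtype.coe_ne_coe.mpr hVU)) hu u.2

theorem finrank_ker_piForest (hF : IsForest S F) {T : Finset α} (hT : T ∈ F) :
    (Module.finrank ℂ (LinearMap.ker (piForest F T)) : ℤ) = mNum F T := by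
  have h := LinearMap.finrank_range_add_finrank_ker (piForest F T)
  rw [LinearMap.range_eq_top.2 (piForest_surjective hF T), finrank_top,
    Module.finrank_pi_fintype] at h
  have hU : ∑ U : ↥(maxUnder F T), (Module.finrank ℂ (Vspace U.1) : ℤ) =
      ∑ U ∈ maxUnder F T, ((U.card : ℤ) - 1) := by
    rw [← Finset.sum_coe_sort (maxUnder F T)]
    exact Finset.sum_congr rfl fun U _ =>
      finrank_Vspace (hF.nonempty (Finset.mem_filter.mp U.2).1)
  rw [mNum, ← finrank_Vspace (hF.nonempty hT), ← hU, ← h]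
  push_cast
  ring

end Forest

theorem nNum_eq_mNum_add_card (F : Finset (Finset α)) (T : Finset α) :
    nNum F T = mNum F T + (maxUnder F T).card := by
  simp only [nNum, mNum, Finset.sum_sub_distrib, Finset.sum_const, nsmul_eq_mul]
  ring

theorem stmt6_general (S : Finset α) (F : Finset (Finset α)) (hF : IsForest S F)
    (T : Finset α) (hT : T ∈ F)
    (M : (U : ↥(maxUnder F T)) → Submodule ℂ (Vspace U.1))
    (hM : ∀ U, Module.finrank ℂ ↥(M U) = 1) :
    Function.Surjective (piForest F T) ∧
    (Module.finrank ℂ ↥(LinearMap.ker (piForest F T)) : ℤ) = mNum F T ∧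
    (Module.finrank ℂ
        ↥(Submodule.comap (piForest F T) (Submodule.pi Set.univ M)) : ℤ)
      = nNum F T := by
  have hsurj := piForest_surjective hF T
  have hker := finrank_ker_piForest hF hT
  refine ⟨hsurj, hker, ?_⟩
  rw [LinearMap.finrank_comap_eq_add_finrank_ker hsurj, Submodule.finrank_pi_univ,
    nNum_eq_mNum_add_card, ← hker]
  simp [hM, add_comm]

/-- Lemma 4.1.5: for a forest `F` and `T ∈ F` with `M(F,T)` nonempty, the map
`π_{F,T}` is surjective, its kernel has dimension `m(F,T)`, and the preimage of a
direct sum of lines `⊕ M_U` has dimension `n(F,T)`. -/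
theorem stmt6 (S : Finset α) (F : Finset (Finset α)) (hF : IsForest S F)
    (T : Finset α) (hT : T ∈ F) (hne : (maxUnder F T).Nonempty)
    (M : (U : ↥(maxUnder F T)) → Submodule ℂ (Vspace U.1))
    (hM : ∀ U, Module.finrank ℂ ↥(M U) = 1) :
    Function.Surjective (piForest F T) ∧
    (Module.finrank ℂ ↥(LinearMap.ker (piForest F T)) : ℤ) = mNum F T ∧
    (Module.finrank ℂ
        ↥(Submodule.comap (piForest F T) (Submodule.pi Set.univ M)) : ℤ)
      = nNum F T :=
  stmt6_general S F hF T hT M hM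

end
end

section
/- Let 𝓛 be a nonempty collection of subsets of S, each of size at least 2, let T = supp(𝓛), and let π_𝓛 : V_T → ⊕_{U ∈ 𝓛} V_U be the product of the restriction maps π_U^T. Then π_𝓛 is injective if and only if 𝓛 is connected. -/
variable {α : Type*} [DecidableEq α]

/-- A collection `L` of subsets is connected if its support admits no splitting
`A ⊔ B` into nonempty parts such that every member of `L` lies in `A` or in `B`. -/
def IsConnectedFam (L : Finset (Finset α)) : Prop :=
  ¬ ∃ A B : Finset α, A ∪ B = L.sup id ∧ A ∩ B = ∅ ∧
      A.Nonempty ∧ B.Nonempty ∧ ∀ U ∈ L, U ⊆ A ∨ U ⊆ B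

noncomputable section

/-- The map `π_L : V_{supp L} → ⊕_{U ∈ L} V_U`. -/
def piFam (L : Finset (Finset α)) :
    Vspace (L.sup id) →ₗ[ℂ] ((U : ↥L) → Vspace U.1) :=
  LinearMap.pi fun U => piUT U.1 (L.sup id) (Finset.le_sup (f := id) U.2)

lemma mem_constSub {T : Finset α} {g : ↥T → ℂ} :
    g ∈ constSub T ↔ ∃ c : ℂ, ∀ x, g x = c := by
  rw [constSub, Submodule.mem_span_singleton]
  constructor
  · rintro ⟨a, rfl⟩
    exact ⟨a, fun x => by simp⟩
  · rintro ⟨c, hc⟩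
    refine ⟨c, funext fun x => ?_⟩
    simp [hc x]

lemma piFam_mk_eq_zero {L : Finset (Finset α)} (f : ↥(L.sup id) → ℂ) :
    piFam L (Submodule.Quotient.mk f) = 0 ↔
      ∀ U : ↥L, restr U.1 (L.sup id) (Finset.le_sup (f := id) U.2) f ∈ constSub U.1 := by
  rw [funext_iff]
  simp only [piFam, LinearMap.pi_apply, piUT, Submodule.mapQ_apply, Pi.zero_apply,
    Submodule.Quotient.mk_eq_zero]

/-- Lemma 9.2.6: for a nonempty collection `L` of subsets of `S`, each of size at
least 2, the map `π_L : V_{supp L} → ⊕_{U ∈ L} V_U` is injective iff `L` is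
connected. -/
theorem stmt7 (S : Finset α) (L : Finset (Finset α))
    (hS : ∀ U ∈ L, U ⊆ S) (hne : L.Nonempty) (h2 : ∀ U ∈ L, 2 ≤ U.card) :
    Function.Injective (piFam L) ↔ IsConnectedFam L := by
  classical
  constructor
  · -- injective → connected
    intro hinj
    rintro ⟨A, B, hAB, hint, hA, hB, hsub⟩
    set f : ↥(L.sup id) → ℂ := fun x => if x.1 ∈ A then 1 else 0 with hf
    have hnotAB : ∀ a, a ∈ A → a ∈ B → False := by
      intro a ha hb
      have : a ∈ A ∩ B := Finset.mem_inter.mpr ⟨ha, hb⟩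
      rw [hint] at this
      exact absurd this (Finset.notMem_empty a)
    have hker : piFam L (Submodule.Quotient.mk f) = 0 := by
      rw [piFam_mk_eq_zero]
      intro U
      rw [mem_constSub]
      rcases hsub U.1 U.2 with hU | hU
      · refine ⟨1, fun x => ?_⟩
        simp only [restr, LinearMap.funLeft_apply, hf]
        rw [if_pos (hU x.2)]
      · refine ⟨0, fun x => ?_⟩
        simp only [restr, LinearMap.funLeft_apply, hf]
        rw [if_neg (fun ha => hnotAB _ ha (hU x.2))]
    have hne0 : Submodule.Quotient.mk f ≠ (0 : Vspace (L.sup id)) := by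
      rw [Ne, Submodule.Quotient.mk_eq_zero, mem_constSub]
      rintro ⟨c, hc⟩
      obtain ⟨a, ha⟩ := hA
      obtain ⟨b, hb⟩ := hB
      have haT : a ∈ L.sup id := hAB ▸ Finset.mem_union_left _ ha
      have hbT : b ∈ L.sup id := hAB ▸ Finset.mem_union_right _ hb
      have h1 : f ⟨a, haT⟩ = 1 := by simp [hf, ha]
      have h0 : f ⟨b, hbT⟩ = 0 := by
        simp only [hf]
        rw [if_neg (fun hbA => hnotAB _ hbA hb)]
      rw [hc] at h1 h0
      rw [h0] at h1
      norm_num at h1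
    exact hne0 (hinj (by rw [hker, map_zero]))
  · -- connected → injective
    intro hconn
    rw [← LinearMap.ker_eq_bot, LinearMap.ker_eq_bot']
    intro x hx
    obtain ⟨f, rfl⟩ := Submodule.Quotient.mk_surjective _ x
    rw [piFam_mk_eq_zero] at hx
    rw [Submodule.Quotient.mk_eq_zero]
    obtain ⟨U₀, hU₀⟩ := hne
    have hU₀ne : ∃ t, t ∈ U₀ := by
      have hcard := h2 U₀ hU₀
      have hpos : 0 < U₀.card := by omega
      obtain ⟨t, ht⟩ := Finset.card_pos.mp hpos
      exact ⟨t, ht⟩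
    obtain ⟨t₀, ht₀U⟩ := hU₀ne
    have ht₀ : t₀ ∈ L.sup id := Finset.mem_sup.mpr ⟨U₀, hU₀, ht₀U⟩
    set c0 : ℂ := f ⟨t₀, ht₀⟩ with hc0
    by_contra hfc
    apply hconn
    refine ⟨(L.sup id).filter (fun a => ∀ h : a ∈ L.sup id, f ⟨a, h⟩ = c0),
            (L.sup id).filter (fun a => ∀ h : a ∈ L.sup id, f ⟨a, h⟩ ≠ c0),
            ?_, ?_, ?_, ?_, ?_⟩
    · ext a
      simp only [Finset.mem_union, Finset.mem_filter]
      constructor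
      · rintro (⟨h, _⟩ | ⟨h, _⟩) <;> exact h
      · intro h
        by_cases hfa : f ⟨a, h⟩ = c0
        · exact Or.inl ⟨h, fun _ => hfa⟩
        · exact Or.inr ⟨h, fun _ => hfa⟩
    · ext a
      simp only [Finset.mem_inter, Finset.mem_filter, Finset.notMem_empty, iff_false]
      rintro ⟨⟨h1, h2⟩, ⟨_, h4⟩⟩
      exact h4 h1 (h2 h1)
    · exact ⟨t₀, Finset.mem_filter.mpr ⟨ht₀, fun _ => rfl⟩⟩
    · by_contra hBe
      rw [Finset.not_nonempty_iff_eq_empty] at hBe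
      apply hfc
      rw [mem_constSub]
      refine ⟨c0, fun x => ?_⟩
      by_contra hfx
      have : x.1 ∈ (L.sup id).filter (fun a => ∀ h : a ∈ L.sup id, f ⟨a, h⟩ ≠ c0) := by
        refine Finset.mem_filter.mpr ⟨x.2, fun h => ?_⟩
        have : (⟨x.1, h⟩ : ↥(L.sup id)) = x := Subtype.ext rfl
        rw [this]
        exact hfx
      rw [hBe] at this
      exact absurd this (Finset.notMem_empty _)
    · intro U hU
      obtain ⟨c, hc⟩ := mem_constSub.mp (hx ⟨U, hU⟩)
      have hUT : U ⊆ L.sup id := Finset.le_sup (f := id) hU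
      by_cases hcc : c = c0
      · left
        intro a ha
        refine Finset.mem_filter.mpr ⟨hUT ha, fun h => ?_⟩
        have := hc ⟨a, ha⟩
        simp only [restr, LinearMap.funLeft_apply] at this
        rw [show (⟨a, h⟩ : ↥(L.sup id)) = ⟨a, hUT ha⟩ from Subtype.ext rfl, this, hcc]
      · right
        intro a ha
        refine Finset.mem_filter.mpr ⟨hUT ha, fun h => ?_⟩
        have := hc ⟨a, ha⟩
        simp only [restr, LinearMap.funLeft_apply] at this
        rw [show (⟨a, h⟩ : ↥(L.sup id)) = ⟨a, hUT ha⟩ from Subtype.ext rfl, this]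
        exact hcc

end
end

section
/- Let 𝓛 be a thicket on S and let M ∈ 𝓜̄_𝓛. Then type(M) is an S-tree: its elements are pairwise nested or disjoint, and S ∈ type(M). -/
variable {α : Type*} [DecidableEq α]

/-- A thicket on `S`: a collection `L` of subsets of `S` containing `S`, whose
members have size at least 2, closed under unions of intersecting members. -/
def IsThicket (S : Finset α) (L : Finset (Finset α)) : Prop :=
  S ∈ L ∧ (∀ T ∈ L, T ⊆ S) ∧ (∀ T ∈ L, 2 ≤ T.card) ∧
    ∀ U ∈ L, ∀ V ∈ L, (U ∩ V).Nonempty → U ∪ V ∈ L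

noncomputable section

/-- Membership in `𝓜̄_L`: a family of one-dimensional subspaces `M_T ≤ V_T`
(`T ∈ L`) such that `M_T ≤ (π_U^T)⁻¹(M_U)` whenever `U ⊆ T` in `L`. -/
def MemMbar (L : Finset (Finset α)) (M : (T : ↥L) → Submodule ℂ (Vspace T.1)) : Prop :=
  (∀ T, Module.finrank ℂ ↥(M T) = 1) ∧
    ∀ (U T : ↥L) (h : U.1 ⊆ T.1), M T ≤ Submodule.comap (piUT U.1 T.1 h) (M U)

/-- `type(M) = {U ∈ L : π_U^T(M_T) = 0 for every T ∈ L with T ⊋ U}`. -/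
def typeOf (L : Finset (Finset α)) (M : (T : ↥L) → Submodule ℂ (Vspace T.1)) :
    Set (Finset α) :=
  {U | ∃ _ : U ∈ L, ∀ (T : ↥L) (h : U ⊂ T.1),
      Submodule.map (piUT U T.1 h.subset) (M T) = ⊥}

/-!
A class in `V_T` vanishes exactly when it is represented by a constant function. If `U` and `V`
meet, a function constant on `U` and on `V` takes the same value at a common point, hence is
constant on `U ∪ V`; so `π_U` and `π_V` are jointly injective on `V_{U ∪ V}`. Now if `U, V` lie in
`type(M)`, intersect and are not nested, then `U ∪ V` is in the thicket and strictly contains both,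
so `M_{U ∪ V}` is killed by both projections and must be zero, contradicting `dim M_{U ∪ V} = 1`.
-/

omit [DecidableEq α] in
theorem Vspace.mk_eq_zero_iff {T : Finset α} (f : ↥T → ℂ) :
    (Submodule.Quotient.mk f : Vspace T) = 0 ↔ ∃ c : ℂ, ∀ t, f t = c := by
  rw [Submodule.Quotient.mk_eq_zero, constSub, Submodule.mem_span_singleton]
  simp only [funext_iff, Pi.smul_apply, smul_eq_mul, mul_one, eq_comm]

theorem eq_zero_of_piUT_union_eq_zero {U V : Finset α} (hUV : (U ∩ V).Nonempty)
    {m : Vspace (U ∪ V)} (hU : piUT U (U ∪ V) Finset.subset_union_left m = 0)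
    (hV : piUT V (U ∪ V) Finset.subset_union_right m = 0) : m = 0 := by
  obtain ⟨f, rfl⟩ := Submodule.Quotient.mk_surjective _ m
  simp only [piUT, Submodule.mapQ_apply, restr, LinearMap.funLeft_apply,
    Vspace.mk_eq_zero_iff] at hU hV
  obtain ⟨a, ha⟩ := hU
  obtain ⟨b, hb⟩ := hV
  obtain ⟨x, hx⟩ := hUV
  obtain ⟨hxU, hxV⟩ := Finset.mem_inter.mp hx
  have hab : a = b := (ha ⟨x, hxU⟩).symm.trans (hb ⟨x, hxV⟩)
  refine (Vspace.mk_eq_zero_iff f).mpr ⟨a, fun ⟨w, hw⟩ => ?_⟩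
  rcases Finset.mem_union.mp hw with hwU | hwV
  · exact ha ⟨w, hwU⟩
  · exact (hb ⟨w, hwV⟩).trans hab.symm

omit [DecidableEq α] in
theorem MemMbar.ne_bot {L : Finset (Finset α)} {M : (T : ↥L) → Submodule ℂ (Vspace T.1)}
    (hM : MemMbar L M) (T : ↥L) : M T ≠ ⊥ := fun hT => by
  have hdim := hM.1 T
  rw [hT, finrank_bot] at hdim
  exact zero_ne_one hdim

theorem typeOf_nested_or_disjoint {L : Finset (Finset α)}
    (hunion : ∀ U ∈ L, ∀ V ∈ L, (U ∩ V).Nonempty → U ∪ V ∈ L)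
    {M : (T : ↥L) → Submodule ℂ (Vspace T.1)} (hM : ∀ T, M T ≠ ⊥)
    {U V : Finset α} (hU : U ∈ typeOf L M) (hV : V ∈ typeOf L M) :
    U ⊆ V ∨ V ⊆ U ∨ U ∩ V = ∅ := by
  obtain ⟨hUL, hU⟩ := hU
  obtain ⟨hVL, hV⟩ := hV
  by_contra! hc
  obtain ⟨hUV, hVU, hmeet⟩ := hc
  let W : ↥L := ⟨U ∪ V, hunion U hUL V hVL hmeet⟩
  have hUW : U ⊂ W.1 := left_lt_sup.mpr hVU
  have hVW : V ⊂ W.1 := right_lt_sup.mpr hUV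
  refine hM W (eq_bot_iff.mpr fun m hm => ?_)
  exact eq_zero_of_piUT_union_eq_zero hmeet
    ((Submodule.mem_bot ℂ).mp (hU W hUW ▸ Submodule.mem_map_of_mem hm))
    ((Submodule.mem_bot ℂ).mp (hV W hVW ▸ Submodule.mem_map_of_mem hm))

/-- Lemma 6.1.4: for a thicket `L` on `S` and `M ∈ 𝓜̄_L`, `type(M)` is an
`S`-tree: it contains `S`, its members are subsets of `S` of size at least 2,
and its members are pairwise nested or disjoint. -/
theorem stmt8 (S : Finset α) (L : Finset (Finset α)) (hL : IsThicket S L)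
    (M : (T : ↥L) → Submodule ℂ (Vspace T.1)) (hM : MemMbar L M) :
    S ∈ typeOf L M ∧
    (∀ U ∈ typeOf L M, U ⊆ S ∧ 2 ≤ U.card) ∧
    (∀ U ∈ typeOf L M, ∀ V ∈ typeOf L M, U ⊆ V ∨ V ⊆ U ∨ U ∩ V = ∅) := by
  obtain ⟨hSL, hsub, hcard, hunion⟩ := hL
  refine ⟨⟨hSL, fun T hT => absurd (hsub T.1 T.2) hT.2⟩, ?_, ?_⟩
  · rintro U ⟨hUL, -⟩
    exact ⟨hsub U hUL, hcard U hUL⟩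
  · intro U hU V hV
    exact typeOf_nested_or_disjoint hunion hM.ne_bot hU hV

end
end

section
/- Let 𝓛 be a thicket on S, let 𝓣 ⊆ 𝓛 be an S-tree, and let M = (M_U)_{U ∈ 𝓛} be a family of one-dimensional subspaces M_U ≤ V_U such that the restricted family (M_T)_{T ∈ 𝓣} lies in 𝓜̄_𝓣. Then the following are equivalent: (1) M ∈ 𝓜̄_𝓛 and type(M) ⊆ 𝓣; (2) for every U ∈ 𝓛, π_U^{root(U)}(M_{root(U)}) = M_U, where root(U) is the smallest element of 𝓣 containing U. Moreover, M is the unique family of one-dimensional subspaces extending (M_T)_{T ∈ 𝓣} and satisfying (2). -/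
variable {α : Type*} [DecidableEq α]

noncomputable section

-- auxiliary lemmas

lemma piUT_comp (U T R : Finset α) (h1 : U ⊆ T) (h2 : T ⊆ R) :
    (piUT U T h1).comp (piUT T R h2) = piUT U R (h1.trans h2) := by
  apply Submodule.linearMap_qext
  ext f
  rfl

lemma piUT_map_map (U T R : Finset α) (h1 : U ⊆ T) (h2 : T ⊆ R)
    (N : Submodule ℂ (Vspace R)) :
    Submodule.map (piUT U T h1) (Submodule.map (piUT T R h2) N)
      = Submodule.map (piUT U R (h1.trans h2)) N := by
  rw [← Submodule.map_comp, piUT_comp]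

set_option linter.unusedSectionVars false in
lemma piUT_refl (U : Finset α) (h : U ⊆ U) (x : Vspace U) : piUT U U h x = x := by
  obtain ⟨f, rfl⟩ := Submodule.Quotient.mk_surjective _ x
  rfl

lemma piUT_map_self (U : Finset α) (h : U ⊆ U) (N : Submodule ℂ (Vspace U)) :
    Submodule.map (piUT U U h) N = N := by
  ext x
  simp only [Submodule.mem_map]
  constructor
  · rintro ⟨y, hy, rfl⟩; rwa [piUT_refl]
  · intro hx; exact ⟨x, hx, piUT_refl U h x⟩

lemma dim_one_dichotomy {V : Type*} [AddCommGroup V] [Module ℂ V]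
    {P N : Submodule ℂ V} (hP : Module.finrank ℂ ↥P = 1) (hNP : N ≤ P) :
    N = ⊥ ∨ N = P := by
  by_cases hN : N = ⊥
  · exact Or.inl hN
  right
  obtain ⟨w, hwN, hw0⟩ := Submodule.exists_mem_ne_zero_of_ne_bot hN
  obtain ⟨v, hv0, hv⟩ := finrank_eq_one_iff'.mp hP
  refine le_antisymm hNP fun u hu => ?_
  obtain ⟨c, hc⟩ := hv ⟨w, hNP hwN⟩
  have hc0 : c ≠ 0 := by
    rintro rfl
    apply hw0
    have := congrArg Subtype.val hc
    simpa using this.symm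
  obtain ⟨d, hd⟩ := hv ⟨u, hu⟩
  have h1 : c • (v : V) = w := congrArg Subtype.val hc
  have h2 : d • (v : V) = u := congrArg Subtype.val hd
  have : u = (d * c⁻¹) • w := by
    rw [← h1, ← h2, smul_smul, mul_assoc, inv_mul_cancel₀ hc0, mul_one]
  rw [this]
  exact N.smul_mem _ hwN

lemma root_exists (S : Finset α) (Tr : Finset (Finset α)) (hF : IsForest S Tr)
    (hS : S ∈ Tr) (U : Finset α) (hUne : U.Nonempty) (hUS : U ⊆ S) :
    ∃ R ∈ Tr, U ⊆ R ∧ ∀ V ∈ Tr, U ⊆ V → R ⊆ V := by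
  classical
  obtain ⟨R, hR, hmin⟩ := Finset.exists_min_image (Tr.filter fun V => U ⊆ V)
    Finset.card ⟨S, Finset.mem_filter.mpr ⟨hS, hUS⟩⟩
  rw [Finset.mem_filter] at hR
  refine ⟨R, hR.1, hR.2, fun V hV hUV => ?_⟩
  rcases hF.2.2 R hR.1 V hV with h | h | h
  · exact h
  · have heq : V = R := Finset.eq_of_subset_of_card_le h
      (hmin V (Finset.mem_filter.mpr ⟨hV, hUV⟩))
    rw [heq]
  · exfalso
    obtain ⟨x, hx⟩ := hUne
    have : x ∈ R ∩ V := Finset.mem_inter.mpr ⟨hR.2 hx, hUV hx⟩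
    simp [h] at this

/-- Condition (2): for every `U ∈ L`, if `R` is the smallest element of the tree
`Tr` containing `U` (the root of `U`), then `π_U^R(M_R) = M_U`. -/
def RootCond (L Tr : Finset (Finset α)) (hTrL : Tr ⊆ L)
    (M : (U : ↥L) → Submodule ℂ (Vspace U.1)) : Prop :=
  ∀ (U : ↥L) (R : Finset α) (hR : R ∈ Tr) (hUR : U.1 ⊆ R),
    (∀ V ∈ Tr, U.1 ⊆ V → R ⊆ V) →
    Submodule.map (piUT U.1 R hUR) (M ⟨R, hTrL hR⟩) = M U

/-- Lemma 6.1.8: for a thicket `L` on `S`, an `S`-tree `Tr ⊆ L`, and a family `M`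
of one-dimensional subspaces whose restriction to `Tr` lies in `𝓜̄_{Tr}`, we have
`M ∈ 𝓜̄_L ∧ type(M) ⊆ Tr` iff `M` satisfies the root condition; and `M` is the
unique family with its restriction to `Tr` satisfying the root condition. -/
theorem stmt9 (S : Finset α) (L : Finset (Finset α)) (hL : IsThicket S L)
    (Tr : Finset (Finset α)) (hTrL : Tr ⊆ L)
    (hTree : IsForest S Tr ∧ S ∈ Tr)
    (M : (U : ↥L) → Submodule ℂ (Vspace U.1))
    (hdim : ∀ U, Module.finrank ℂ ↥(M U) = 1)
    (hres : ∀ (U T : ↥L), U.1 ∈ Tr → T.1 ∈ Tr → ∀ h : U.1 ⊆ T.1,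
      M T ≤ Submodule.comap (piUT U.1 T.1 h) (M U)) :
    ((MemMbar L M ∧ typeOf L M ⊆ ↑Tr) ↔ RootCond L Tr hTrL M) ∧
    (RootCond L Tr hTrL M →
      ∀ M' : (U : ↥L) → Submodule ℂ (Vspace U.1),
        (∀ U, Module.finrank ℂ ↥(M' U) = 1) →
        (∀ U : ↥L, U.1 ∈ Tr → M' U = M U) →
        RootCond L Tr hTrL M' → M' = M) := by
  classical
  obtain ⟨hSL, hsub, hcard, hunion⟩ := hL
  obtain ⟨hF, hSTr⟩ := hTree
  have hroot : ∀ U : ↥L, ∃ R ∈ Tr, U.1 ⊆ R ∧ ∀ V ∈ Tr, U.1 ⊆ V → R ⊆ V := by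
    intro U
    apply root_exists S Tr hF hSTr U.1
    · exact Finset.card_pos.mp (lt_of_lt_of_le two_pos (hcard U.1 U.2))
    · exact hsub U.1 U.2
  have hMne : ∀ M'' : (U : ↥L) → Submodule ℂ (Vspace U.1),
      (∀ U, Module.finrank ℂ ↥(M'' U) = 1) → ∀ U, M'' U ≠ ⊥ := by
    intro M'' hd U h
    have := hd U
    rw [h] at this
    simp at this
  constructor
  · constructor
    · -- (M ∈ Mbar ∧ type ⊆ Tr) → RootCond
      rintro ⟨⟨_, hcomp⟩, htype⟩ U R hR hUR hmin
      set B : Finset (Finset α) := L.filter (fun T => ∃ (hT : T ∈ L) (hU : U.1 ⊆ T),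
        Submodule.map (piUT U.1 T hU) (M ⟨T, hT⟩) = M U) with hBdef
      have hUB : U.1 ∈ B := by
        refine Finset.mem_filter.mpr ⟨U.2, U.2, subset_rfl, ?_⟩
        exact piUT_map_self U.1 _ (M U)
      obtain ⟨W, hWB, hWmax⟩ := Finset.exists_max_image B Finset.card ⟨_, hUB⟩
      obtain ⟨hWL0, hWL, hUW, hWeq⟩ := Finset.mem_filter.mp hWB
      have hWtype : W ∈ typeOf L M := by
        refine ⟨hWL, fun T hWT => ?_⟩
        have hle : Submodule.map (piUT W T.1 hWT.subset) (M T) ≤ M ⟨W, hWL⟩ :=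
          Submodule.map_le_iff_le_comap.mpr (hcomp ⟨W, hWL⟩ T hWT.subset)
        rcases dim_one_dichotomy (hdim ⟨W, hWL⟩) hle with h | h
        · exact h
        · exfalso
          have hTB : T.1 ∈ B := by
            refine Finset.mem_filter.mpr ⟨T.2, T.2, hUW.trans hWT.subset, ?_⟩
            rw [← piUT_map_map U.1 W T.1 hUW hWT.subset, h, hWeq]
          have h1 := hWmax T.1 hTB
          have h2 := Finset.card_lt_card hWT
          omega
      have hWTr : W ∈ Tr := htype hWtype
      have hRW : R ⊆ W := hmin W hWTr hUW
      apply le_antisymm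
      · exact Submodule.map_le_iff_le_comap.mpr (hcomp U ⟨R, hTrL hR⟩ hUR)
      · calc M U = Submodule.map (piUT U.1 W hUW) (M ⟨W, hWL⟩) := hWeq.symm
          _ = Submodule.map (piUT U.1 R hUR)
                (Submodule.map (piUT R W hRW) (M ⟨W, hWL⟩)) :=
              (piUT_map_map U.1 R W hUR hRW _).symm
          _ ≤ Submodule.map (piUT U.1 R hUR) (M ⟨R, hTrL hR⟩) :=
              Submodule.map_mono (Submodule.map_le_iff_le_comap.mpr
                (hcomp ⟨R, hTrL hR⟩ ⟨W, hWL⟩ hRW))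
    · -- RootCond → (M ∈ Mbar ∧ type ⊆ Tr)
      intro hRC
      refine ⟨⟨hdim, ?_⟩, ?_⟩
      · intro U T hUT
        obtain ⟨RU, hRU, hURU, hminU⟩ := hroot U
        obtain ⟨RT, hRT, hTRT, hminT⟩ := hroot T
        have hRURT : RU ⊆ RT := hminU RT hRT (hUT.trans hTRT)
        have hMT := hRC T RT hRT hTRT hminT
        have hMU := hRC U RU hRU hURU hminU
        rw [← Submodule.map_le_iff_le_comap]
        calc Submodule.map (piUT U.1 T.1 hUT) (M T)
            = Submodule.map (piUT U.1 T.1 hUT)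
                (Submodule.map (piUT T.1 RT hTRT) (M ⟨RT, hTrL hRT⟩)) := by rw [hMT]
          _ = Submodule.map (piUT U.1 RT (hUT.trans hTRT)) (M ⟨RT, hTrL hRT⟩) :=
              piUT_map_map U.1 T.1 RT hUT hTRT _
          _ = Submodule.map (piUT U.1 RU hURU)
                (Submodule.map (piUT RU RT hRURT) (M ⟨RT, hTrL hRT⟩)) :=
              (piUT_map_map U.1 RU RT hURU hRURT _).symm
          _ ≤ Submodule.map (piUT U.1 RU hURU) (M ⟨RU, hTrL hRU⟩) :=
              Submodule.map_mono (Submodule.map_le_iff_le_comap.mpr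
                (hres ⟨RU, hTrL hRU⟩ ⟨RT, hTrL hRT⟩ hRU hRT hRURT))
          _ = M U := hMU
      · intro U hU
        obtain ⟨hUL, hUtype⟩ := hU
        obtain ⟨R, hR, hUR, hmin⟩ := hroot ⟨U, hUL⟩
        by_cases heq : U = R
        · subst heq; exact hR
        exfalso
        have hss : U ⊂ R := HasSubset.Subset.ssubset_of_ne hUR heq
        apply hMne M hdim ⟨U, hUL⟩
        rw [← hRC ⟨U, hUL⟩ R hR hUR hmin]
        exact hUtype ⟨R, hTrL hR⟩ hss
  · intro hRC M' hdim' hagree hRC'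
    funext U
    obtain ⟨R, hR, hUR, hmin⟩ := hroot U
    have h1 := hRC U R hR hUR hmin
    have h2 := hRC' U R hR hUR hmin
    rw [← h1, ← h2, hagree ⟨R, hTrL hR⟩ hR]

end
end

section
/- Let S be a finite set with |S| ≥ 2 and S⁺ = S ⊔ {+}. Let π : 𝕋_{S⁺} → 𝕋_S be the map sending an S⁺-tree 𝓣 to {V ∩ S : V ∈ 𝓣, |V ∩ S| ≥ 2}. Then for every S-tree 𝓣, the fiber π⁻¹(𝓣) has exactly 2·|𝓣| + |S| elements. -/
variable {α : Type*} [DecidableEq α]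

/-- An `S`-tree: a forest on `S` containing `S`. -/
def IsTree (S : Finset α) (F : Finset (Finset α)) : Prop :=
  IsForest S F ∧ S ∈ F

/-!
Let `U` be an `S⁺`-tree over `𝓣`. The clusters of `U` containing `+` form a chain; let `M` be
the least one and `D = M ∩ S`. Then `U` is recovered from `𝓣` by adding `+` to every cluster of
`𝓣 ∪ {D}` containing `D`, and then keeping `D` itself or not. Either `D ∈ 𝓣`, and both choices
give a tree over `𝓣`, or `D = {s}` for some `s ∈ S`, and `D` cannot be kept. Conversely every
such choice of `D` and of keeping `D` gives a tree over `𝓣`, and distinct choices give distinct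
trees, so the fiber has `2·|𝓣| + |S|` elements.
-/

open Finset

def NestedOrDisjoint (U T : Finset α) : Prop :=
  U ⊆ T ∨ T ⊆ U ∨ U ∩ T = ∅

theorem NestedOrDisjoint.symm {U T : Finset α} (h : NestedOrDisjoint U T) :
    NestedOrDisjoint T U := by
  rcases h with h | h | h
  · exact .inr (.inl h)
  · exact .inl h
  · exact .inr (.inr (inter_comm U T ▸ h))

theorem IsForest.exists_least_mem {X : Finset α} {U : Finset (Finset α)} (hU : IsForest X U)
    {p : α} {V₀ : Finset α} (hV₀ : V₀ ∈ U) (hpV₀ : p ∈ V₀) :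
    ∃ M ∈ U, p ∈ M ∧ ∀ V ∈ U, p ∈ V → M ⊆ V := by
  obtain ⟨M, hM, hmin⟩ := exists_min_image (U.filter (p ∈ ·)) card ⟨V₀, by simp [hV₀, hpV₀]⟩
  rw [mem_filter] at hM
  refine ⟨M, hM.1, hM.2, fun V hV hpV => ?_⟩
  rcases hU.2.2 M hM.1 V hV with h | h | h
  · exact h
  · exact (eq_of_subset_of_card_le h (hmin V (by simp [hV, hpV]))).ge
  · simpa [h] using mem_inter.2 ⟨hM.2, hpV⟩

theorem eq_insert_inter_of_subset_insert {p : α} {S V : Finset α} (hV : V ⊆ insert p S)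
    (hpV : p ∈ V) : V = insert p (V ∩ S) := by
  rw [insert_inter_distrib, insert_eq_of_mem hpV, inter_eq_left.2 hV]

def treeRestrict (S : Finset α) (U : Finset (Finset α)) : Finset (Finset α) :=
  (U.filter fun V => 2 ≤ (V ∩ S).card).image (fun V => V ∩ S)

theorem mem_treeRestrict {S W : Finset α} {U : Finset (Finset α)} :
    W ∈ treeRestrict S U ↔ ∃ V ∈ U, 2 ≤ (V ∩ S).card ∧ V ∩ S = W := by
  simp [treeRestrict, and_assoc]

theorem treeRestrict_eq_filter_image (S : Finset α) (U : Finset (Finset α)) :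
    treeRestrict S U = (U.image (· ∩ S)).filter (2 ≤ ·.card) := by
  rw [treeRestrict, filter_image]

def insertAbove (p : α) (D W : Finset α) : Finset α :=
  if D ⊆ W then insert p W else W

section InsertAbove

variable {p : α} {D W W' : Finset α}

theorem insertAbove_of_subset (h : D ⊆ W) : insertAbove p D W = insert p W := if_pos h

theorem insertAbove_of_not_subset (h : ¬ D ⊆ W) : insertAbove p D W = W := if_neg h

theorem subset_insertAbove : W ⊆ insertAbove p D W := by
  unfold insertAbove; split_ifs
  exacts [subset_insert p W, Subset.rfl]

theorem insertAbove_inter {S : Finset α} (hp : p ∉ S) (hW : W ⊆ S) :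
    insertAbove p D W ∩ S = W := by
  unfold insertAbove; split_ifs
  exacts [by rw [insert_inter_of_notMem hp, inter_eq_left.2 hW], inter_eq_left.2 hW]

theorem insertAbove_subset_insert {S : Finset α} (hW : W ⊆ S) :
    insertAbove p D W ⊆ insert p S := by
  unfold insertAbove; split_ifs
  exacts [insert_subset_insert p hW, hW.trans (subset_insert p S)]

theorem nestedOrDisjoint_insertAbove_left (hD : D.Nonempty) (hpW' : p ∉ W')
    (h : NestedOrDisjoint W W') (hDW : D ⊆ W) :
    NestedOrDisjoint (insertAbove p D W) (insertAbove p D W') := by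
  rw [insertAbove_of_subset hDW]
  by_cases hDW' : D ⊆ W'
  · rw [insertAbove_of_subset hDW']
    rcases h with h | h | h
    · exact .inl (insert_subset_insert p h)
    · exact .inr (.inl (insert_subset_insert p h))
    · exact ((hD.mono (subset_inter hDW hDW')).ne_empty h).elim
  · rw [insertAbove_of_not_subset hDW']
    rcases h with h | h | h
    · exact absurd (hDW.trans h) hDW'
    · exact .inr (.inl (h.trans (subset_insert p W)))
    · exact .inr (.inr (by rw [insert_inter_of_notMem hpW', h]))

theorem nestedOrDisjoint_insertAbove (hD : D.Nonempty) (hpW : p ∉ W) (hpW' : p ∉ W')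
    (h : NestedOrDisjoint W W') :
    NestedOrDisjoint (insertAbove p D W) (insertAbove p D W') := by
  by_cases hDW : D ⊆ W
  · exact nestedOrDisjoint_insertAbove_left hD hpW' h hDW
  by_cases hDW' : D ⊆ W'
  · exact (nestedOrDisjoint_insertAbove_left hD hpW h.symm hDW').symm
  rwa [insertAbove_of_not_subset hDW, insertAbove_of_not_subset hDW']

theorem nestedOrDisjoint_insertAbove_self (h : NestedOrDisjoint W D) :
    NestedOrDisjoint (insertAbove p D W) D := by
  by_cases hDW : D ⊆ W
  · exact .inr (.inl ((insertAbove_of_subset hDW).symm ▸ hDW.trans (subset_insert p W)))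
  · rwa [insertAbove_of_not_subset hDW]

end InsertAbove

/-- In the tree picture, `p` hangs on the edge above `D` if `b`, and at the vertex `D` otherwise
(on a leaf edge when `D` is a singleton). -/
def graft (p : α) (D : Finset α) (b : Bool) (Tr : Finset (Finset α)) : Finset (Finset α) :=
  (insert D Tr).image (insertAbove p D) ∪ if b then {D} else ∅

section Graft

variable {S D : Finset α} {p : α} {b : Bool} {Tr : Finset (Finset α)}

theorem mem_graft {V : Finset α} :
    V ∈ graft p D b Tr ↔ (∃ W ∈ insert D Tr, insertAbove p D W = V) ∨ (b ∧ D = V) := by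
  unfold graft
  cases b <;> simp only [mem_union, mem_image, Bool.false_eq_true, if_false, if_true,
    notMem_empty, mem_singleton, or_false, false_and, true_and, eq_comm]

theorem insert_mem_graft : insert p D ∈ graft p D b Tr :=
  mem_graft.2 (.inl ⟨D, mem_insert_self D Tr, insertAbove_of_subset Subset.rfl⟩)

theorem isTree_graft (hTr : IsTree S Tr) (hp : p ∉ S) (hDS : D ⊆ S) (hD : D.Nonempty)
    (hDTr : ∀ W ∈ Tr, NestedOrDisjoint D W) (hb : b → 2 ≤ D.card) :
    IsTree (insert p S) (graft p D b Tr) := by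
  obtain ⟨⟨hsub, hcard, hnest⟩, hS⟩ := hTr
  have hFS : ∀ W ∈ insert D Tr, W ⊆ S := by
    simpa only [forall_mem_insert] using ⟨hDS, hsub⟩
  have hF : ∀ W ∈ insert D Tr, ∀ W' ∈ insert D Tr, NestedOrDisjoint W W' := by
    simp only [forall_mem_insert]
    exact ⟨⟨.inl Subset.rfl, hDTr⟩, fun W hW => ⟨(hDTr W hW).symm, hnest W hW⟩⟩
  refine ⟨⟨fun V hV => ?_, fun V hV => ?_, fun V hV V' hV' => ?_⟩, ?_⟩
  · rcases mem_graft.1 hV with ⟨W, hW, rfl⟩ | ⟨-, rfl⟩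
    exacts [insertAbove_subset_insert (hFS W hW), hDS.trans (subset_insert p S)]
  · rcases mem_graft.1 hV with ⟨W, hW, rfl⟩ | ⟨hb', rfl⟩
    · rcases mem_insert.1 hW with rfl | hW
      · rw [insertAbove_of_subset Subset.rfl, card_insert_of_notMem fun h => hp (hDS h)]
        exact Nat.succ_le_succ hD.card_pos
      · exact (hcard W hW).trans (card_le_card subset_insertAbove)
    · exact hb hb'
  · have hpF : ∀ W ∈ insert D Tr, p ∉ W := fun W hW h => hp (hFS W hW h)
    rcases mem_graft.1 hV with ⟨W, hW, rfl⟩ | ⟨-, rfl⟩ <;>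
      rcases mem_graft.1 hV' with ⟨W', hW', rfl⟩ | ⟨-, rfl⟩
    · exact nestedOrDisjoint_insertAbove hD (hpF W hW) (hpF W' hW') (hF W hW W' hW')
    · exact nestedOrDisjoint_insertAbove_self (hF W hW D (mem_insert_self D Tr))
    · exact (nestedOrDisjoint_insertAbove_self (hF W' hW' D (mem_insert_self D Tr))).symm
    · exact .inl Subset.rfl
  · exact mem_graft.2 (.inl ⟨S, mem_insert_of_mem hS, insertAbove_of_subset hDS⟩)

theorem treeRestrict_graft (hTr : IsForest S Tr) (hp : p ∉ S) (hDS : D ⊆ S)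
    (hDTr : 2 ≤ D.card → D ∈ Tr) : treeRestrict S (graft p D b Tr) = Tr := by
  have hFS : ∀ W ∈ insert D Tr, W ⊆ S := by
    simpa only [forall_mem_insert] using ⟨hDS, hTr.1⟩
  have himage : (graft p D b Tr).image (· ∩ S) = insert D Tr := by
    ext W
    simp only [mem_image, mem_graft]
    constructor
    · rintro ⟨V, ⟨W', hW', rfl⟩ | ⟨-, rfl⟩, rfl⟩
      · rwa [insertAbove_inter hp (hFS W' hW')]
      · rw [inter_eq_left.2 hDS]
        exact mem_insert_self D Tr
    · exact fun hW => ⟨_, .inl ⟨W, hW, rfl⟩, insertAbove_inter hp (hFS W hW)⟩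
  ext W
  rw [treeRestrict_eq_filter_image, himage, mem_filter, mem_insert]
  constructor
  · rintro ⟨rfl | hW, hc⟩
    exacts [hDTr hc, hW]
  · exact fun hW => ⟨.inr hW, hTr.2.1 W hW⟩

theorem subset_of_insert_mem_graft (hp : p ∉ S) (hTr : ∀ W ∈ Tr, W ⊆ S) (hDS : D ⊆ S)
    {E : Finset α} (hES : E ⊆ S) (h : insert p E ∈ graft p D b Tr) : D ⊆ E := by
  rcases mem_graft.1 h with ⟨W, hW, hWE⟩ | ⟨-, hED⟩
  · have hWS : W ⊆ S := (mem_insert.1 hW).elim (· ▸ hDS) (hTr W)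
    by_cases hDW : D ⊆ W
    · rw [insertAbove_of_subset hDW] at hWE
      rwa [← erase_insert fun h => hp (hES h), ← hWE, erase_insert fun h => hp (hWS h)]
    · rw [insertAbove_of_not_subset hDW] at hWE
      exact absurd (hWS (hWE ▸ mem_insert_self p E)) hp
  · exact absurd (hDS (hED ▸ mem_insert_self p E)) hp

theorem self_mem_graft_iff (hp : p ∉ S) (hDS : D ⊆ S) : D ∈ graft p D b Tr ↔ b = true := by
  refine ⟨fun h => ?_, fun hb => mem_graft.2 (.inr ⟨hb, rfl⟩)⟩
  rcases mem_graft.1 h with ⟨W, -, hWD⟩ | ⟨hb, -⟩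
  · by_cases hDW : D ⊆ W
    · rw [insertAbove_of_subset hDW] at hWD
      exact absurd (hDS (hWD ▸ mem_insert_self p W)) hp
    · rw [insertAbove_of_not_subset hDW] at hWD
      exact absurd (hWD ▸ Subset.rfl) hDW
  · exact hb

theorem graft_injOn (hp : p ∉ S) (hTr : ∀ W ∈ Tr, W ⊆ S) :
    Set.InjOn (fun x : Finset α × Bool => graft p x.1 x.2 Tr) {x | x.1 ⊆ S} := by
  rintro ⟨D, b⟩ (hD : D ⊆ S) ⟨D', b'⟩ (hD' : D' ⊆ S) (h : graft p D b Tr = graft p D' b' Tr)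
  obtain rfl : D = D' := Subset.antisymm
    (subset_of_insert_mem_graft hp hTr hD hD' (by rw [h]; exact insert_mem_graft))
    (subset_of_insert_mem_graft hp hTr hD' hD (by rw [← h]; exact insert_mem_graft))
  have hbb' := (self_mem_graft_iff hp hD (b := b) (Tr := Tr)).symm
  rw [h, self_mem_graft_iff hp hD] at hbb'
  rw [Bool.eq_iff_iff.2 hbb']

end Graft

def graftSites (S : Finset α) (Tr : Finset (Finset α)) : Finset (Finset α × Bool) :=
  Tr ×ˢ univ ∪ S.image fun s => ({s}, false)

section GraftSites

variable {S D : Finset α} {b : Bool} {Tr : Finset (Finset α)}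

theorem mem_graftSites :
    (D, b) ∈ graftSites S Tr ↔ D ∈ Tr ∨ ∃ s ∈ S, {s} = D ∧ false = b := by
  simp [graftSites]

theorem subset_of_mem_graftSites (hTr : ∀ W ∈ Tr, W ⊆ S) (h : (D, b) ∈ graftSites S Tr) :
    D ⊆ S := by
  rcases mem_graftSites.1 h with hD | ⟨s, hs, rfl, -⟩
  exacts [hTr D hD, singleton_subset_iff.2 hs]

theorem card_graftSites (hTr : ∀ W ∈ Tr, 2 ≤ W.card) :
    (graftSites S Tr).card = 2 * Tr.card + S.card := by
  have hdisj : Disjoint (Tr ×ˢ univ) (S.image fun s => ({s}, false)) := by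
    refine disjoint_left.2 fun ⟨D, b⟩ h1 h2 => ?_
    obtain ⟨s, -, hs⟩ := mem_image.1 h2
    obtain rfl : {s} = D := congrArg Prod.fst hs
    simpa using hTr _ (mem_product.1 h1).1
  rw [graftSites, card_union_of_disjoint hdisj, card_product, card_univ, Fintype.card_bool,
    card_image_of_injective _ fun s t h => singleton_injective (congrArg Prod.fst h), mul_comm]

variable {p : α}

theorem graft_mem_fiber (hTr : IsTree S Tr) (hp : p ∉ S) (h : (D, b) ∈ graftSites S Tr) :
    IsTree (insert p S) (graft p D b Tr) ∧ treeRestrict S (graft p D b Tr) = Tr := by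
  rcases mem_graftSites.1 h with hD | ⟨s, hs, rfl, rfl⟩
  · have hD2 := hTr.1.2.1 D hD
    exact ⟨isTree_graft hTr hp (hTr.1.1 D hD) (card_pos.1 (by omega))
      (hTr.1.2.2 D hD) fun _ => hD2, treeRestrict_graft hTr.1 hp (hTr.1.1 D hD) fun _ => hD⟩
  · have hsS := singleton_subset_iff.2 hs
    have hsW : ∀ W ∈ Tr, NestedOrDisjoint {s} W := fun W _ => by
      by_cases hsW : s ∈ W
      exacts [.inl (singleton_subset_iff.2 hsW), .inr (.inr (singleton_inter_of_notMem hsW))]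
    exact ⟨isTree_graft hTr hp hsS (singleton_nonempty s) hsW nofun,
      treeRestrict_graft hTr.1 hp hsS fun h => by simp at h⟩

end GraftSites

section Fiber

variable {S M V W : Finset α} {p : α} {U : Finset (Finset α)}

theorem subset_of_mem_treeRestrict (h : W ∈ treeRestrict S U) : W ⊆ S := by
  obtain ⟨V, -, -, rfl⟩ := mem_treeRestrict.1 h
  exact inter_subset_right

theorem mem_treeRestrict_of_notMem (hU : IsForest (insert p S) U) (hV : V ∈ U) (hpV : p ∉ V) :
    V ∈ treeRestrict S U := by
  have hVS : V ∩ S = V := inter_eq_left.2 ((subset_insert_iff_of_notMem hpV).1 (hU.1 V hV))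
  exact mem_treeRestrict.2 ⟨V, hV, by rw [hVS]; exact hU.2.1 V hV, hVS⟩

theorem mem_or_insert_mem_of_mem_treeRestrict (hU : ∀ V ∈ U, V ⊆ insert p S)
    (hW : W ∈ treeRestrict S U) : W ∈ U ∨ insert p W ∈ U := by
  obtain ⟨V, hV, -, rfl⟩ := mem_treeRestrict.1 hW
  by_cases hpV : p ∈ V
  · exact .inr (eq_insert_inter_of_subset_insert (hU V hV) hpV ▸ hV)
  · exact .inl (by rwa [inter_eq_left.2 ((subset_insert_iff_of_notMem hpV).1 (hU V hV))])

theorem IsForest.inter_nonempty (hU : IsForest (insert p S) U) (hM : M ∈ U) :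
    (M ∩ S).Nonempty := by
  obtain ⟨x, hx, hxp⟩ := exists_mem_ne (hU.2.1 M hM) p
  exact ⟨x, mem_inter.2 ⟨hx, (mem_insert.1 (hU.1 M hM hx)).resolve_left hxp⟩⟩

theorem IsForest.eq_inter_of_inter_subset (hU : IsForest (insert p S) U) (hM : M ∈ U)
    (hpM : p ∈ M) (hV : V ∈ U) (hpV : p ∉ V) (hMV : M ∩ S ⊆ V) : V = M ∩ S := by
  rcases hU.2.2 V hV M hM with h | h | h
  · exact Subset.antisymm
      (subset_inter h ((subset_insert_iff_of_notMem hpV).1 (hU.1 V hV))) hMV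
  · exact absurd (h hpM) hpV
  · obtain ⟨x, hx⟩ := hU.inter_nonempty hM
    simpa [h] using mem_inter.2 ⟨hMV hx, (mem_inter.1 hx).1⟩

variable (hU : IsForest (insert p S) U) (hM : M ∈ U) (hpM : p ∈ M)
  (hleast : ∀ V ∈ U, p ∈ V → M ⊆ V)
include hU hM hpM hleast

theorem graft_subset_of_isLeast (hp : p ∉ S) :
    graft p (M ∩ S) (decide (M ∩ S ∈ U)) (treeRestrict S U) ⊆ U := by
  have hMU : insert p (M ∩ S) ∈ U := eq_insert_inter_of_subset_insert (hU.1 M hM) hpM ▸ hM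
  intro V hV
  rcases mem_graft.1 hV with ⟨W, hW, rfl⟩ | ⟨hb, rfl⟩
  · rcases mem_insert.1 hW with rfl | hW
    · rwa [insertAbove_of_subset Subset.rfl]
    have hWS := subset_of_mem_treeRestrict hW
    rcases mem_or_insert_mem_of_mem_treeRestrict hU.1 hW with hWU | hWU
    · by_cases hDW : M ∩ S ⊆ W
      · rwa [insertAbove_of_subset hDW,
          hU.eq_inter_of_inter_subset hM hpM hWU (fun h => hp (hWS h)) hDW]
      · rwa [insertAbove_of_not_subset hDW]
    · have hDW : M ∩ S ⊆ insert p W ∩ S :=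
        inter_subset_inter_right (hleast _ hWU (mem_insert_self p W))
      rw [insert_inter_of_notMem hp, inter_eq_left.2 hWS] at hDW
      rwa [insertAbove_of_subset hDW]
  · exact of_decide_eq_true hb

theorem subset_graft_of_isLeast :
    U ⊆ graft p (M ∩ S) (decide (M ∩ S ∈ U)) (treeRestrict S U) := by
  intro V hV
  rw [mem_graft]
  by_cases hpV : p ∈ V
  · have hVS := eq_insert_inter_of_subset_insert (hU.1 V hV) hpV
    have hDV : M ∩ S ⊆ V ∩ S := inter_subset_inter_right (hleast V hV hpV)
    refine .inl ⟨V ∩ S, ?_, by rw [insertAbove_of_subset hDV, ← hVS]⟩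
    rcases hDV.eq_or_ssubset with h | h
    · exact h ▸ mem_insert_self _ _
    · have := (hU.inter_nonempty hM).card_pos
      have := card_lt_card h
      exact mem_insert_of_mem (mem_treeRestrict.2 ⟨V, hV, by omega, rfl⟩)
  · by_cases hDV : M ∩ S ⊆ V
    · obtain rfl := hU.eq_inter_of_inter_subset hM hpM hV hpV hDV
      exact .inr ⟨decide_eq_true hV, rfl⟩
    · exact .inl ⟨V, mem_insert_of_mem (mem_treeRestrict_of_notMem hU hV hpV),
        insertAbove_of_not_subset hDV⟩

end Fiber

theorem exists_graft_eq {S : Finset α} {p : α} {U : Finset (Finset α)} (hp : p ∉ S)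
    (hU : IsTree (insert p S) U) :
    ∃ x ∈ graftSites S (treeRestrict S U), graft p x.1 x.2 (treeRestrict S U) = U := by
  obtain ⟨M, hM, hpM, hleast⟩ := hU.1.exists_least_mem hU.2 (mem_insert_self p S)
  refine ⟨(M ∩ S, decide (M ∩ S ∈ U)), mem_graftSites.2 ?_, Subset.antisymm
    (graft_subset_of_isLeast hU.1 hM hpM hleast hp)
    (subset_graft_of_isLeast hU.1 hM hpM hleast)⟩
  by_cases hD : 2 ≤ (M ∩ S).card
  · exact .inl (mem_treeRestrict.2 ⟨M, hM, hD, rfl⟩)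
  · have := (hU.1.inter_nonempty hM).card_pos
    obtain ⟨s, hs⟩ := card_eq_one.1 (by omega : (M ∩ S).card = 1)
    have hsMS : s ∈ M ∩ S := hs ▸ mem_singleton_self s
    exact .inr ⟨s, (mem_inter.1 hsMS).2, hs.symm,
      (decide_eq_false fun h => hD (hU.1.2.1 _ h)).symm⟩

theorem stmt12_general (S : Finset α) (p : α) (hp : p ∉ S)
    (Tr : Finset (Finset α)) (hTr : IsTree S Tr) :
    {U : Finset (Finset α) | IsTree (insert p S) U ∧
        (U.filter fun V => 2 ≤ (V ∩ S).card).image (fun V => V ∩ S) = Tr}.ncard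
      = 2 * Tr.card + S.card := by
  have hfiber : {U | IsTree (insert p S) U ∧ treeRestrict S U = Tr} =
      ↑((graftSites S Tr).image fun x => graft p x.1 x.2 Tr) := by
    ext U
    simp only [Set.mem_ofPred_eq, coe_image, Set.mem_image, mem_coe]
    constructor
    · rintro ⟨hU, rfl⟩
      exact exists_graft_eq hp hU
    · rintro ⟨⟨D, b⟩, hx, rfl⟩
      exact graft_mem_fiber hTr hp hx
  have hinj : Set.InjOn (fun x : Finset α × Bool => graft p x.1 x.2 Tr) (graftSites S Tr) :=
    (graft_injOn hp hTr.1.1).mono fun x hx => subset_of_mem_graftSites hTr.1.1 hx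
  change {U | IsTree (insert p S) U ∧ treeRestrict S U = Tr}.ncard = _
  rw [hfiber, Set.ncard_coe_finset, card_image_of_injOn hinj, card_graftSites hTr.1.2.1]

/-- Lemma 7.4.6: for a finite set `S` with `|S| ≥ 2` and `S⁺ = S ⊔ {+}`, the map
`π : 𝕋_{S⁺} → 𝕋_S`, sending an `S⁺`-tree `𝓣` to `{V ∩ S : V ∈ 𝓣, |V ∩ S| ≥ 2}`,
has fibers of cardinality `2·|𝓣| + |S|` over every `S`-tree `𝓣`. -/
theorem stmt12 (S : Finset α) (hS : 2 ≤ S.card) (p : α) (hp : p ∉ S)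
    (Tr : Finset (Finset α)) (hTr : IsTree S Tr) :
    {U : Finset (Finset α) | IsTree (insert p S) U ∧
        (U.filter fun V => 2 ≤ (V ∩ S).card).image (fun V => V ∩ S) = Tr}.ncard
      = 2 * Tr.card + S.card :=
  stmt12_general S p hp Tr hTr
end

section
/- Let 𝓕 be a forest on S, let y = ∏_{T ∈ 𝓕} y_T^{n_T} be a monomial in ℤ_𝓕, and let x = q_𝓕(y) ∈ R_𝓕. Then x = 0 if and only if y ∉ N[𝓕]. Moreover, if y ∈ N[𝓕], the set 𝓥 = {T ∈ 𝓕 : n_T ≥ 1} has a largest element T (i.e., 𝓥 is a T-tree), and Σ_{U ∈ 𝓥} n_U = |T| − 2, then x = x_T^{|T|−2}. -/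
variable {α : Type*} [DecidableEq α]

noncomputable section

/-- The generator of `J_F` attached to `T ∈ F` and a set `Us` of pairwise disjoint
proper subsets of `T`. -/
def relJ (F : Finset (Finset α)) (T : ↥F) (Us : Finset ↥F) : MvPolynomial ↥F ℤ :=
  MvPolynomial.X T ^ (T.1.card - 1 - ∑ U ∈ Us, (U.1.card - 1)) *
    ∏ U ∈ Us, (MvPolynomial.X T - MvPolynomial.X U)

/-- The ideal `J_F ⊆ ℤ_F`. -/
def idealJ (F : Finset (Finset α)) : Ideal (MvPolynomial ↥F ℤ) :=
  Ideal.span {P | ∃ (T : ↥F) (Us : Finset ↥F),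
    (∀ U ∈ Us, U.1 ⊂ T.1) ∧
    (∀ U ∈ Us, ∀ V ∈ Us, U ≠ V → U.1 ∩ V.1 = ∅) ∧
    P = relJ F T Us}

/-!
A monomial of `N[F]` survives in `R_F` because `coeffSumN`, the sum of the coefficients of the
monomials of `N[F]`, kills every multiple `y^d · relJ F T Us` of a generator. Expanding the
product, its signed monomials are indexed by the subsets `A ⊆ Us`. Either all of them violate the
bound at `T`, or some `U₀ ∈ Us` lies in no saturated `T' ⊂ T` (one where the term `A = Us` could
exceed the bound); inserting `U₀` into `A` then does not change membership in `N[F]`, and the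
terms cancel in pairs. If there were no such `U₀`, the maximal saturated sets would partition `Us`
and absorb `∑ (|U| - 1)`, which is too large.

A monomial violating the bound at a minimal `T` is congruent, via the generator built from the
maximal sets `Us` of its support below `T`, to a signed sum of monomials that still violate the
bound at `T` but have smaller weight `∑ n_U |U|`. The same generator applied to a `T`-tree of
degree `|T| - 2` moves one unit from each set of `Us` to `T`; all other terms are known by
induction on `|T| - 2 - n_T`, and the alternating sum gives `x = x_T^{|T|-2}`.
-/

open Finset MvPolynomial

theorem Finset.sum_card_sub_one_le_card_biUnion_sub_one {ι : Type*} (s : Finset ι)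
    (f : ι → Finset α) (hs : (s : Set ι).PairwiseDisjoint f) :
    ∑ i ∈ s, (#(f i) - 1) ≤ #(s.biUnion f) - 1 := by
  classical
  induction s using Finset.induction_on with
  | empty => simp
  | insert a s ha ih =>
    have hdisj : Disjoint (f a) (s.biUnion f) := (disjoint_biUnion_right _ _ _).2 fun i hi =>
      hs (mem_insert_self a s) (mem_insert_of_mem hi) (ne_of_mem_of_not_mem hi ha).symm
    rw [sum_insert ha, biUnion_insert, card_union_of_disjoint hdisj]
    have := ih (hs.subset (by simp))
    omega

theorem Finset.sum_powerset_neg_one_pow_card_smul_eq_zero {ι M : Type*} [DecidableEq ι]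
    [AddCommGroup M] {s : Finset ι} {a : ι} (ha : a ∈ s) {f : Finset ι → M}
    (hf : ∀ A ⊆ s, f (insert a A) = f A) :
    ∑ A ∈ s.powerset, (-1 : ℤ) ^ #A • f A = 0 := by
  rw [← insert_erase ha, sum_powerset_insert (notMem_erase a s), ← sum_add_distrib]
  refine sum_eq_zero fun A hA => ?_
  rw [mem_powerset] at hA
  have haA : a ∉ A := fun h => notMem_erase a s (hA h)
  rw [hf A (hA.trans (erase_subset a s)), card_insert_of_notMem haA, pow_succ, mul_neg_one,
    neg_smul, add_neg_cancel]

theorem Finset.eq_of_sum_powerset_neg_one_pow_card_smul_eq_zero {ι M : Type*}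
    [AddCommGroup M] {s : Finset ι} (hs : s.Nonempty) {f : Finset ι → M} {c : M}
    (hf : ∀ A ⊂ s, f A = c) (h₀ : ∑ A ∈ s.powerset, (-1 : ℤ) ^ #A • f A = 0) : f s = c := by
  have hc : ∑ A ∈ s.powerset, (-1 : ℤ) ^ #A • c = 0 := by
    rw [← sum_smul, sum_powerset_neg_one_pow_card_of_nonempty hs, zero_smul]
  have hsc : (-1 : ℤ) ^ #s • (f s - c) = 0 := calc
    (-1 : ℤ) ^ #s • (f s - c) = ∑ A ∈ s.powerset, (-1 : ℤ) ^ #A • (f A - c) := by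
        rw [sum_eq_single s (fun A hA hne => ?_) (fun h => absurd (mem_powerset_self s) h)]
        rw [hf A (ssubset_of_subset_of_ne (mem_powerset.1 hA) hne), sub_self, smul_zero]
    _ = 0 := by simp only [smul_sub, sum_sub_distrib, hc, h₀, sub_zero]
  rcases neg_one_pow_eq_or ℤ #s with h | h <;> rw [h] at hsc
  · rwa [one_smul, sub_eq_zero] at hsc
  · rwa [neg_smul, one_smul, neg_eq_zero, sub_eq_zero] at hsc

namespace ForestRing

variable {F : Finset (Finset α)}

def degBelow (k : ↥F → ℕ) (T : ↥F) : ℕ :=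
  ∑ U ∈ univ.filter (fun U : ↥F => U.1 ⊆ T.1), k U

/-- The monomial with exponent `k` lies in `N[F]`. -/
def InN (k : ↥F → ℕ) : Prop := ∀ T : ↥F, degBelow k T ≤ #T.1 - 2

instance : DecidablePred (InN (F := F)) := fun _ => Fintype.decidableForallFintype

def mon (k : ↥F → ℕ) : MvPolynomial ↥F ℤ := ∏ U, X U ^ k U

def weight (k : ↥F → ℕ) : ℕ := ∑ U, k U * #U.1

/-- The exponent of `y_T` in the generator `relJ F T Us`. -/
def relDeg (T : ↥F) (Us : Finset ↥F) : ℕ := #T.1 - 1 - ∑ U ∈ Us, (#U.1 - 1)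

/-- The exponent of the `A`-term of `mon g * relJ F T Us` once each factor `y_T - y_U` is
expanded, choosing `-y_U` for `U ∈ A` and `y_T` for `U ∈ Us \ A`. -/
def relExp (g : ↥F → ℕ) (T : ↥F) (Us A : Finset ↥F) : ↥F → ℕ :=
  g + Pi.single T (relDeg T Us + #(Us \ A)) + fun U => if U ∈ A then 1 else 0

theorem relJ_mem_idealJ {T : ↥F} {Us : Finset ↥F} (hUs : ∀ U ∈ Us, U.1 ⊂ T.1)
    (hdisj : (Us : Set ↥F).PairwiseDisjoint Subtype.val) : relJ F T Us ∈ idealJ F :=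
  Ideal.subset_span ⟨T, Us, hUs,
    fun _ hU _ hV hUV => disjoint_iff_inter_eq_empty.1 (hdisj hU hV hUV), rfl⟩

theorem sum_card_sub_one_le {T : ↥F} {Us : Finset ↥F} (hUs : ∀ U ∈ Us, U.1 ⊆ T.1)
    (hdisj : (Us : Set ↥F).PairwiseDisjoint Subtype.val) :
    ∑ U ∈ Us, (#U.1 - 1) ≤ #T.1 - 1 :=
  (sum_card_sub_one_le_card_biUnion_sub_one Us Subtype.val hdisj).trans
    (Nat.sub_le_sub_right (card_le_card (biUnion_subset.2 hUs)) 1)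

theorem relDeg_add_sum {T : ↥F} {Us : Finset ↥F} (hUs : ∀ U ∈ Us, U.1 ⊆ T.1)
    (hdisj : (Us : Set ↥F).PairwiseDisjoint Subtype.val) :
    relDeg T Us + ∑ U ∈ Us, (#U.1 - 1) = #T.1 - 1 :=
  Nat.sub_add_cancel (sum_card_sub_one_le hUs hdisj)

omit [DecidableEq α] in
theorem mon_add (k l : ↥F → ℕ) : mon (k + l) = mon k * mon l := by
  simp only [mon, Pi.add_apply, pow_add, prod_mul_distrib]

theorem mon_single (T : ↥F) (e : ℕ) : mon (Pi.single T e) = X T ^ e := by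
  rw [mon, prod_eq_single T (fun U _ hU => by rw [Pi.single_eq_of_ne hU, pow_zero]) (by simp),
    Pi.single_eq_same]

theorem mon_indicator (A : Finset ↥F) : mon (fun U => if U ∈ A then 1 else 0) = ∏ U ∈ A, X U := by
  simp only [mon, pow_ite, pow_one, pow_zero, prod_ite_mem, univ_inter]

omit [DecidableEq α] in
theorem mon_eq_monomial (k : ↥F → ℕ) :
    mon k = monomial (Finsupp.equivFunOnFinite.symm k) 1 := by
  rw [monomial_eq, C_1, one_mul, Finsupp.prod_fintype _ _ (fun _ => pow_zero _)]
  rfl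

theorem mon_mul_relJ (g : ↥F → ℕ) (T : ↥F) (Us : Finset ↥F) :
    mon g * relJ F T Us = ∑ A ∈ Us.powerset, (-1 : ℤ) ^ #A • mon (relExp g T Us A) := by
  have hprod : ∏ U ∈ Us, (X T - X U : MvPolynomial ↥F ℤ)
      = ∑ A ∈ Us.powerset, (-1) ^ #A * (∏ U ∈ A, X U) * X T ^ #(Us \ A) := by
    simp only [sub_eq_neg_add, prod_add, prod_neg, prod_const]
  rw [show relJ F T Us = X T ^ relDeg T Us * ∏ U ∈ Us, (X T - X U) from rfl, hprod, mul_sum,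
    mul_sum]
  refine sum_congr rfl fun A _ => ?_
  rw [relExp, mon_add, mon_add, mon_single, mon_indicator, zsmul_eq_mul]
  push_cast
  ring

variable (F) in
def coeffSumN : MvPolynomial ↥F ℤ →ₗ[ℤ] ℤ :=
  (basisMonomials ↥F ℤ).constr ℤ fun d => if InN ⇑d then 1 else 0

theorem coeffSumN_mon (k : ↥F → ℕ) : coeffSumN F (mon k) = if InN k then 1 else 0 := by
  rw [mon_eq_monomial, show monomial (Finsupp.equivFunOnFinite.symm k) (1 : ℤ)
    = basisMonomials ↥F ℤ (Finsupp.equivFunOnFinite.symm k) by rw [coe_basisMonomials],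
    coeffSumN, Module.Basis.constr_basis, Finsupp.coe_equivFunOnFinite_symm]

omit [DecidableEq α] in
theorem monomial_eq_smul_mon (d : ↥F →₀ ℕ) (c : ℤ) : monomial d c = c • mon ⇑d := by
  rw [mon_eq_monomial, Finsupp.equivFunOnFinite_symm_coe, smul_monomial, smul_eq_mul, mul_one]

section Statistics

theorem degBelow_relExp (g : ↥F → ℕ) (T : ↥F) (Us A : Finset ↥F) (T' : ↥F) :
    degBelow (relExp g T Us A) T' = degBelow g T'
      + (if T.1 ⊆ T'.1 then relDeg T Us + #(Us \ A) else 0)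
      + #(A.filter fun U => U.1 ⊆ T'.1) := by
  simp only [degBelow, relExp, Pi.add_apply, sum_add_distrib, sum_pi_single', mem_filter,
    mem_univ, true_and, sum_boole]
  rw [Nat.cast_id]
  congr 2
  ext U
  simp [and_comm]

theorem weight_relExp (g : ↥F → ℕ) (T : ↥F) (Us A : Finset ↥F) :
    weight (relExp g T Us A) = weight g + (relDeg T Us + #(Us \ A)) * #T.1 + ∑ U ∈ A, #U.1 := by
  simp only [weight, relExp, Pi.add_apply, add_mul, sum_add_distrib, Pi.single_apply, ite_mul,
    zero_mul, one_mul, sum_ite_eq', mem_univ, if_true, sum_ite_mem, univ_inter]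

variable {g : ↥F → ℕ} {T : ↥F} {Us : Finset ↥F}

theorem relExp_apply_self {A : Finset ↥F} (hTA : T ∉ A) :
    relExp g T Us A T = g T + relDeg T Us + #(Us \ A) := by
  simp [relExp, hTA, add_assoc]

theorem relExp_sub_single {k : ↥F → ℕ} (hkT : relDeg T Us + #Us ≤ k T) :
    relExp (k - Pi.single T (relDeg T Us + #Us)) T Us ∅ = k := by
  funext U
  by_cases hU : U = T
  · subst hU
    simp only [relExp, sdiff_empty, notMem_empty, if_false, Pi.add_apply, Pi.sub_apply,
      Pi.single_eq_same, add_zero]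
    omega
  · simp [relExp, hU]

theorem relExp_sub_single_sub_indicator {k : ↥F → ℕ} (hTUs : T ∉ Us) (hkT : relDeg T Us ≤ k T)
    (hk : ∀ U ∈ Us, 1 ≤ k U) :
    relExp (k - Pi.single T (relDeg T Us) - fun U => if U ∈ Us then 1 else 0) T Us Us = k := by
  funext U
  by_cases hU : U = T
  · subst hU
    simp only [relExp, sdiff_self, bot_eq_empty, card_empty, add_zero, Pi.add_apply,
      Pi.sub_apply, Pi.single_eq_same, hTUs, if_false, tsub_zero]
    omega
  · by_cases hUUs : U ∈ Us
    · have := hk U hUUs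
      simp only [relExp, Pi.add_apply, Pi.sub_apply, Pi.single_eq_of_ne hU, hUUs, if_true,
        tsub_zero, add_zero]
      omega
    · simp [relExp, hU, hUUs]

theorem subset_of_one_le_relExp (hg : ∀ U, 1 ≤ g U → U.1 ⊆ T.1) (hUs : ∀ U ∈ Us, U.1 ⊆ T.1)
    {A : Finset ↥F} (hA : A ⊆ Us) {U : ↥F} (hU : 1 ≤ relExp g T Us A U) : U.1 ⊆ T.1 := by
  by_cases hUT : U = T
  · rw [hUT]
  by_cases hUA : U ∈ A
  · exact hUs U (hA hUA)
  apply hg U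
  simpa [relExp, hUT, hUA] using hU

theorem degBelow_relExp_of_subset (hUs : ∀ U ∈ Us, U.1 ⊆ T.1) {A : Finset ↥F} (hA : A ⊆ Us)
    {T' : ↥F} (hTT' : T.1 ⊆ T'.1) :
    degBelow (relExp g T Us A) T' = degBelow g T' + relDeg T Us + #Us := by
  rw [degBelow_relExp, if_pos hTT',
    filter_true_of_mem fun U hU => (hUs U (hA hU)).trans hTT', ← card_sdiff_add_card_eq_card hA]
  omega

theorem degBelow_relExp_of_not_subset (A : Finset ↥F) {T' : ↥F} (hTT' : ¬ T.1 ⊆ T'.1) :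
    degBelow (relExp g T Us A) T' = degBelow g T' + #(A.filter fun U => U.1 ⊆ T'.1) := by
  rw [degBelow_relExp, if_neg hTT', add_zero]

theorem degBelow_relExp_mono (hUs : ∀ U ∈ Us, U.1 ⊆ T.1) {A B : Finset ↥F} (hAB : A ⊆ B)
    (hB : B ⊆ Us) (T' : ↥F) :
    degBelow (relExp g T Us A) T' ≤ degBelow (relExp g T Us B) T' := by
  by_cases hTT' : T.1 ⊆ T'.1
  · rw [degBelow_relExp_of_subset hUs (hAB.trans hB) hTT', degBelow_relExp_of_subset hUs hB hTT']
  · rw [degBelow_relExp_of_not_subset A hTT', degBelow_relExp_of_not_subset B hTT']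
    gcongr

theorem weight_relExp_lt (hUs : ∀ U ∈ Us, U.1 ⊂ T.1) {A : Finset ↥F} (hA : A ⊆ Us)
    (hA₀ : A.Nonempty) : weight (relExp g T Us A) < weight (relExp g T Us ∅) := by
  have hlt : ∑ U ∈ A, #U.1 < #A * #T.1 := by
    calc ∑ U ∈ A, #U.1 < ∑ _U ∈ A, #T.1 :=
          sum_lt_sum_of_nonempty hA₀ fun U hU => card_lt_card (hUs U (hA hU))
      _ = #A * #T.1 := by rw [sum_const, smul_eq_mul]
  rw [weight_relExp, weight_relExp, sdiff_empty, sum_empty, ← card_sdiff_add_card_eq_card hA]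
  nlinarith

end Statistics

theorem exists_minimal_violation {k : ↥F → ℕ} (hk : ¬ InN k) :
    ∃ T : ↥F, ¬ degBelow k T ≤ #T.1 - 2 ∧ ∀ U : ↥F, U.1 ⊂ T.1 → degBelow k U ≤ #U.1 - 2 := by
  classical
  obtain ⟨T, hT⟩ := (univ.filter fun T : ↥F => ¬ degBelow k T ≤ #T.1 - 2).exists_minimal
    (by simpa [InN, filter_nonempty_iff] using hk)
  refine ⟨T, (mem_filter.1 hT.1).2, fun U hU => by_contra fun h => ?_⟩
  exact not_subset_of_ssubset hU (hT.2 (by simpa using h) hU.subset)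

theorem eq_single_of_degBelow_le {k : ↥F → ℕ} {T : ↥F} (hsupp : ∀ U, 1 ≤ k U → U.1 ⊆ T.1)
    (hT : degBelow k T ≤ k T) : k = Pi.single T (k T) := by
  funext U
  by_cases hUT : U = T
  · subst hUT
    rw [Pi.single_eq_same]
  rw [Pi.single_eq_of_ne hUT]
  by_contra hU
  have hpair : k U + k T ≤ degBelow k T :=
    (sum_pair hUT).symm.le.trans <| sum_le_sum_of_subset fun V hV => by
      rcases mem_insert.1 hV with rfl | hV
      · simpa using hsupp V (by omega)
      · simp [mem_singleton.1 hV]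
  omega

theorem degBelow_eq_sum {k : ↥F → ℕ} {T : ↥F} (hsupp : ∀ U, 1 ≤ k U → U.1 ⊆ T.1) :
    degBelow k T = ∑ U, k U :=
  sum_subset (filter_subset _ _) fun U _ hU => by
    by_contra h
    exact hU (by simpa using hsupp U (by omega))

section Forest

variable {S : Finset α} (hF : IsForest S F)
include hF

theorem two_le_card (U : ↥F) : 2 ≤ #U.1 := hF.2.1 U U.2

theorem ssubset_of_subset_of_subset {U T T' : ↥F} (hUT : U.1 ⊆ T.1) (hUT' : U.1 ⊆ T'.1)
    (hTT' : ¬ T.1 ⊆ T'.1) : T'.1 ⊂ T.1 := by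
  rcases hF.2.2 T' T'.2 T T.2 with h | h | h
  · exact ssubset_of_subset_not_subset h hTT'
  · exact absurd h hTT'
  · have hU : U.1 ⊆ ∅ := h ▸ subset_inter hUT' hUT
    have := two_le_card hF U
    simp_all

theorem exists_pairwiseDisjoint_cover (s : Finset ↥F) :
    ∃ P ⊆ s, (P : Set ↥F).PairwiseDisjoint Subtype.val ∧ ∀ U ∈ s, ∃ V ∈ P, U.1 ⊆ V.1 := by
  classical
  refine ⟨s.filter (Maximal (· ∈ s)), filter_subset _ _, fun V hV W hW hVW => ?_,
    fun U hU => ?_⟩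
  · rw [coe_filter] at hV hW
    rcases hF.2.2 V V.2 W W.2 with h | h | h
    · exact absurd (hV.2.eq_of_le hW.1 h) hVW
    · exact absurd (hW.2.eq_of_le hV.1 h).symm hVW
    · exact disjoint_iff_inter_eq_empty.2 h
  · obtain ⟨V, hUV, hV⟩ := s.exists_le_maximal hU
    exact ⟨V, mem_filter.2 ⟨hV.1, hV⟩, hUV⟩

theorem sum_sum_filter_subset {M : Type*} [AddCommMonoid M] {P : Finset ↥F}
    (hP : (P : Set ↥F).PairwiseDisjoint Subtype.val) (s : Finset ↥F) (f : ↥F → M) :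
    ∑ V ∈ P, ∑ U ∈ s.filter (fun U => U.1 ⊆ V.1), f U
      = ∑ U ∈ s.filter (fun U => ∃ V ∈ P, U.1 ⊆ V.1), f U := by
  classical
  have hdisj : (P : Set ↥F).PairwiseDisjoint fun V => s.filter (fun U => U.1 ⊆ V.1) := by
    intro V hV W hW hVW
    refine Finset.disjoint_left.2 fun U hUV hUW => ?_
    obtain ⟨a, ha⟩ := card_pos.1 (lt_of_lt_of_le two_pos (two_le_card hF U))
    exact Finset.disjoint_left.1 (hP hV hW hVW) ((mem_filter.1 hUV).2 ha) ((mem_filter.1 hUW).2 ha)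
  rw [← sum_biUnion hdisj]
  congr 1
  ext U
  simp only [mem_biUnion, mem_filter]
  tauto

theorem sum_degBelow_le {P : Finset ↥F} (hP : (P : Set ↥F).PairwiseDisjoint Subtype.val)
    {T : ↥F} (hPT : ∀ V ∈ P, V.1 ⊆ T.1) (k : ↥F → ℕ) :
    ∑ V ∈ P, degBelow k V ≤ degBelow k T := by
  calc ∑ V ∈ P, degBelow k V = ∑ U ∈ univ.filter (fun U => ∃ V ∈ P, U.1 ⊆ V.1), k U :=
        sum_sum_filter_subset hF hP univ k
    _ ≤ degBelow k T := sum_le_sum_of_subset fun U hU => by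
        obtain ⟨V, hV, hUV⟩ := (mem_filter.1 hU).2
        exact mem_filter.2 ⟨mem_univ U, hUV.trans (hPT V hV)⟩

theorem exists_cover_support_below (k : ↥F → ℕ) (T : ↥F) :
    ∃ Vs : Finset ↥F, (∀ V ∈ Vs, V.1 ⊂ T.1 ∧ 1 ≤ k V) ∧
      (Vs : Set ↥F).PairwiseDisjoint Subtype.val ∧
      degBelow k T ≤ k T + ∑ V ∈ Vs, degBelow k V := by
  classical
  obtain ⟨Vs, hVs, hdisj, hcover⟩ :=
    exists_pairwiseDisjoint_cover hF (univ.filter fun U => U.1 ⊂ T.1 ∧ 1 ≤ k U)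
  have hVsT : ∀ V ∈ Vs, V.1 ⊂ T.1 ∧ 1 ≤ k V := fun V hV => by simpa using hVs hV
  refine ⟨Vs, hVsT, hdisj, ?_⟩
  have hT : T ∉ univ.filter (fun U => ∃ V ∈ Vs, U.1 ⊆ V.1) := by
    simp only [mem_filter, mem_univ, true_and, not_exists, not_and]
    exact fun V hV hTV => not_subset_of_ssubset (hVsT V hV).1 hTV
  rw [show ∑ V ∈ Vs, degBelow k V = _ from sum_sum_filter_subset hF hdisj univ k, ← sum_insert hT]
  refine sum_le_sum_of_ne_zero fun U hU hkU => ?_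
  rcases (mem_filter.1 hU).2.eq_or_ssubset with h | h
  · exact mem_insert.2 (Or.inl (Subtype.ext h))
  · obtain ⟨V, hV, hUV⟩ := hcover U
      (mem_filter.2 ⟨mem_univ U, h, Nat.one_le_iff_ne_zero.2 hkU⟩)
    exact mem_insert_of_mem (mem_filter.2 ⟨mem_univ U, V, hV, hUV⟩)

theorem sum_degBelow_add_card_le {Vs : Finset ↥F} {k : ↥F → ℕ}
    (hk : ∀ V ∈ Vs, degBelow k V ≤ #V.1 - 2) :
    ∑ V ∈ Vs, degBelow k V + #Vs ≤ ∑ V ∈ Vs, (#V.1 - 1) := by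
  rw [card_eq_sum_ones, ← sum_add_distrib]
  exact sum_le_sum fun V hV => by have := hk V hV; have := two_le_card hF V; omega

theorem degBelow_add_relDeg_add_card_le {k : ↥F → ℕ} {T : ↥F} {Vs : Finset ↥F}
    (hVs : ∀ V ∈ Vs, V.1 ⊆ T.1) (hdisj : (Vs : Set ↥F).PairwiseDisjoint Subtype.val)
    (hsplit : degBelow k T ≤ k T + ∑ V ∈ Vs, degBelow k V)
    (hk : ∀ V ∈ Vs, degBelow k V ≤ #V.1 - 2) :
    degBelow k T + relDeg T Vs + #Vs ≤ k T + (#T.1 - 1) := by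
  have := sum_degBelow_add_card_le hF hk
  have := relDeg_add_sum hVs hdisj
  omega

theorem inN_relExp_insert_iff {g : ↥F → ℕ} {T : ↥F} {Us : Finset ↥F}
    (hUs : ∀ U ∈ Us, U.1 ⊂ T.1) {U₀ : ↥F} (hU₀ : U₀ ∈ Us)
    (hfree : ∀ T' : ↥F, U₀.1 ⊆ T'.1 → T'.1 ⊂ T.1 →
      degBelow g T' + #(Us.filter fun U => U.1 ⊆ T'.1) ≤ #T'.1 - 2)
    {A : Finset ↥F} (hA : A ⊆ Us) :
    InN (relExp g T Us (insert U₀ A)) ↔ InN (relExp g T Us A) := by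
  have hUs' : ∀ U ∈ Us, U.1 ⊆ T.1 := fun U hU => (hUs U hU).subset
  have hA' : insert U₀ A ⊆ Us := insert_subset hU₀ hA
  refine forall_congr' fun T' => ?_
  by_cases hTT' : T.1 ⊆ T'.1
  · rw [degBelow_relExp_of_subset hUs' hA' hTT', degBelow_relExp_of_subset hUs' hA hTT']
  rw [degBelow_relExp_of_not_subset _ hTT', degBelow_relExp_of_not_subset _ hTT']
  by_cases hU₀T' : U₀.1 ⊆ T'.1
  · have hb := hfree T' hU₀T' (ssubset_of_subset_of_subset hF (hUs' U₀ hU₀) hU₀T' hTT')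
    have h₁ := card_le_card (filter_subset_filter (fun U : ↥F => U.1 ⊆ T'.1) hA')
    have h₂ := card_le_card (filter_subset_filter (fun U : ↥F => U.1 ⊆ T'.1) hA)
    exact iff_of_true (by omega) (by omega)
  · rw [filter_insert, if_neg hU₀T']

theorem exists_unsaturated {g : ↥F → ℕ} {T : ↥F} {Us : Finset ↥F}
    (hUs : ∀ U ∈ Us, U.1 ⊂ T.1) (hdisj : (Us : Set ↥F).PairwiseDisjoint Subtype.val)
    (hle : degBelow g T + relDeg T Us + #Us ≤ #T.1 - 2) :
    ∃ U₀ ∈ Us, ∀ T' : ↥F, U₀.1 ⊆ T'.1 → T'.1 ⊂ T.1 →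
      degBelow g T' + #(Us.filter fun U => U.1 ⊆ T'.1) ≤ #T'.1 - 2 := by
  classical
  by_contra! hsat
  obtain ⟨P, hPsat, hP, hcover⟩ := exists_pairwiseDisjoint_cover hF (univ.filter fun T' =>
    T'.1 ⊂ T.1 ∧ #T'.1 - 2 < degBelow g T' + #(Us.filter fun U => U.1 ⊆ T'.1))
  have hPT : ∀ V ∈ P, V.1 ⊂ T.1 ∧
      #V.1 - 1 ≤ degBelow g V + #(Us.filter fun U => U.1 ⊆ V.1) := fun V hV => by
    obtain ⟨hVT, hV⟩ := (mem_filter.1 (hPsat hV)).2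
    have := two_le_card hF V
    exact ⟨hVT, by omega⟩
  have hsplit (f : ↥F → ℕ) :
      ∑ U ∈ Us, f U = ∑ V ∈ P, ∑ U ∈ Us.filter (fun U => U.1 ⊆ V.1), f U := by
    rw [sum_sum_filter_subset hF hP, filter_true_of_mem fun U hU => ?_]
    obtain ⟨T', hUT', hT'T, hT'⟩ := hsat U hU
    obtain ⟨V, hV, hT'V⟩ := hcover T' (mem_filter.2 ⟨mem_univ _, hT'T, hT'⟩)
    exact ⟨V, hV, hUT'.trans hT'V⟩
  have hcount : ∑ U ∈ Us, (#U.1 - 1) ≤ degBelow g T + #Us := calc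
    ∑ U ∈ Us, (#U.1 - 1) = ∑ V ∈ P, ∑ U ∈ Us.filter (fun U => U.1 ⊆ V.1), (#U.1 - 1) :=
        hsplit _
    _ ≤ ∑ V ∈ P, (#V.1 - 1) := sum_le_sum fun V _ =>
        sum_card_sub_one_le (fun U hU => (mem_filter.1 hU).2) (hdisj.subset (filter_subset _ _))
    _ ≤ ∑ V ∈ P, (degBelow g V + #(Us.filter fun U => U.1 ⊆ V.1)) :=
        sum_le_sum fun V hV => (hPT V hV).2
    _ = ∑ V ∈ P, degBelow g V + #Us := by
        rw [sum_add_distrib, card_eq_sum_ones Us, hsplit]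
        simp only [card_eq_sum_ones]
    _ ≤ degBelow g T + #Us := by
        gcongr
        exact sum_degBelow_le hF hP (fun V hV => (hPT V hV).1.subset) g
  have := relDeg_add_sum (fun U hU => (hUs U hU).subset) hdisj
  have := two_le_card hF T
  omega

theorem sum_powerset_inN_relExp_eq_zero (g : ↥F → ℕ) {T : ↥F} {Us : Finset ↥F}
    (hUs : ∀ U ∈ Us, U.1 ⊂ T.1) (hdisj : (Us : Set ↥F).PairwiseDisjoint Subtype.val) :
    ∑ A ∈ Us.powerset, (-1 : ℤ) ^ #A • (if InN (relExp g T Us A) then (1 : ℤ) else 0) = 0 := by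
  by_cases hle : degBelow g T + relDeg T Us + #Us ≤ #T.1 - 2
  · obtain ⟨U₀, hU₀, hfree⟩ := exists_unsaturated hF hUs hdisj hle
    exact sum_powerset_neg_one_pow_card_smul_eq_zero hU₀ fun A hA => by
      simp only [inN_relExp_insert_iff hF hUs hU₀ hfree hA]
  · refine sum_eq_zero fun A hA => ?_
    rw [if_neg fun hN => hle ?_, smul_zero]
    rw [← degBelow_relExp_of_subset (fun U hU => (hUs U hU).subset) (mem_powerset.1 hA)
      subset_rfl]
    exact hN T

theorem coeffSumN_mul_relJ {T : ↥F} {Us : Finset ↥F} (hUs : ∀ U ∈ Us, U.1 ⊂ T.1)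
    (hdisj : (Us : Set ↥F).PairwiseDisjoint Subtype.val) (p : MvPolynomial ↥F ℤ) :
    coeffSumN F (p * relJ F T Us) = 0 := by
  induction p using MvPolynomial.induction_on' with
  | monomial d c =>
    rw [monomial_eq_smul_mon, smul_mul_assoc, mon_mul_relJ, map_smul, map_sum]
    simp only [map_zsmul, coeffSumN_mon, sum_powerset_inN_relExp_eq_zero hF _ hUs hdisj,
      smul_zero]
  | add p q hp hq => rw [add_mul, map_add, hp, hq, add_zero]

theorem coeffSumN_eq_zero_of_mem {p : MvPolynomial ↥F ℤ} (hp : p ∈ idealJ F) :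
    coeffSumN F p = 0 := by
  suffices ∀ q, coeffSumN F (q * p) = 0 by simpa using this 1
  induction hp using Submodule.span_induction with
  | mem x hx =>
    obtain ⟨T, Us, hUs, hdisj, rfl⟩ := hx
    exact coeffSumN_mul_relJ hF hUs
      (fun U hU V hV hUV => disjoint_iff_inter_eq_empty.2 (hdisj U hU V hV hUV))
  | zero => simp
  | add x y _ _ hx hy => exact fun q => by rw [mul_add, map_add, hx, hy, add_zero]
  | smul a x _ hx => exact fun q => by rw [smul_eq_mul, ← mul_assoc]; exact hx _

theorem mon_mem_idealJ_of_not_inN {k : ↥F → ℕ} (hk : ¬ InN k) : mon k ∈ idealJ F := by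
  induction hw : weight k using Nat.strong_induction_on generalizing k with
  | _ w ih =>
  obtain ⟨T, hT, hmin⟩ := exists_minimal_violation hk
  obtain ⟨Vs, hVs, hdisj, hsplit⟩ := exists_cover_support_below hF k T
  have hVsT : ∀ V ∈ Vs, V.1 ⊂ T.1 := fun V hV => (hVs V hV).1
  have hVsT' : ∀ V ∈ Vs, V.1 ⊆ T.1 := fun V hV => (hVsT V hV).subset
  have hkT : relDeg T Vs + #Vs ≤ k T := by
    have := degBelow_add_relDeg_add_card_le hF hVsT' hdisj hsplit fun V hV => hmin V (hVsT V hV)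
    have := two_le_card hF T
    omega
  set g := k - Pi.single T (relDeg T Vs + #Vs)
  have hk_eq : relExp g T Vs ∅ = k := relExp_sub_single hkT
  have hdeg : ∀ A ⊆ Vs, degBelow (relExp g T Vs A) T = degBelow k T := fun A hA => by
    rw [← hk_eq, degBelow_relExp_of_subset hVsT' hA subset_rfl,
      degBelow_relExp_of_subset hVsT' (empty_subset _) subset_rfl]
  have hrel := mon_mul_relJ g T Vs
  rw [← add_sum_erase _ _ (empty_mem_powerset Vs), card_empty, pow_zero, one_smul, hk_eq] at hrel
  refine (add_mem_cancel_right (sum_mem fun A hA => ?_)).1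
    (hrel ▸ (idealJ F).mul_mem_left _ (relJ_mem_idealJ hVsT hdisj))
  obtain ⟨hA₀, hA⟩ := mem_erase.1 hA
  refine zsmul_mem (ih _ ?_ (fun hN => hT ?_) rfl) _
  · exact hw ▸ hk_eq ▸ weight_relExp_lt hVsT (mem_powerset.1 hA) (nonempty_iff_ne_empty.2 hA₀)
  · exact hdeg A (mem_powerset.1 hA) ▸ hN T

theorem mk_mon_eq_pow_of_inN (T : ↥F) {k : ↥F → ℕ} (hk : InN k)
    (hsupp : ∀ U, 1 ≤ k U → U.1 ⊆ T.1) (hdeg : degBelow k T = #T.1 - 2) :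
    Ideal.Quotient.mk (idealJ F) (mon k) = Ideal.Quotient.mk (idealJ F) (X T ^ (#T.1 - 2)) := by
  induction hd : #T.1 - 2 - k T using Nat.strong_induction_on generalizing k with
  | _ d ih =>
  by_cases hbase : #T.1 - 2 ≤ k T
  · have hkT : k T ≤ degBelow k T :=
      single_le_sum (fun _ _ => Nat.zero_le _) (mem_filter.2 ⟨mem_univ T, subset_rfl⟩)
    rw [eq_single_of_degBelow_le hsupp (by omega), mon_single, show k T = #T.1 - 2 by omega]
  obtain ⟨Vs, hVs, hdisj, hsplit⟩ := exists_cover_support_below hF k T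
  have hVsT : ∀ V ∈ Vs, V.1 ⊆ T.1 := fun V hV => (hVs V hV).1.subset
  have hTVs : T ∉ Vs := fun h => (hVs T h).1.ne rfl
  have hVs₀ : Vs.Nonempty := by
    rw [nonempty_iff_ne_empty]
    rintro rfl
    rw [sum_empty] at hsplit
    omega
  have hkT : relDeg T Vs ≤ k T := by
    have := degBelow_add_relDeg_add_card_le hF hVsT hdisj hsplit fun V _ => hk V
    have := card_pos.2 hVs₀
    omega
  set g := k - Pi.single T (relDeg T Vs) - fun U => if U ∈ Vs then 1 else 0
  have hk_eq : relExp g T Vs Vs = k :=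
    relExp_sub_single_sub_indicator hTVs hkT fun V hV => (hVs V hV).2
  have hkT_eq : k T = g T + relDeg T Vs := by
    rw [← hk_eq, relExp_apply_self hTVs, sdiff_self, bot_eq_empty, card_empty, add_zero]
  have hterm (A : Finset ↥F) (hA : A ⊂ Vs) : Ideal.Quotient.mk (idealJ F)
      (mon (relExp g T Vs A)) = Ideal.Quotient.mk (idealJ F) (X T ^ (#T.1 - 2)) := by
    have hAT := relExp_apply_self (g := g) (Us := Vs) fun h => hTVs (hA.subset h)
    have hVsA := card_pos.2 (sdiff_nonempty.2 (not_subset_of_ssubset hA))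
    refine ih _ (by omega) (fun T' => (degBelow_relExp_mono hVsT hA.subset subset_rfl T').trans
      (hk_eq ▸ hk T')) (fun U hU => subset_of_one_le_relExp (fun U hU => hsupp U ?_) hVsT
        hA.subset hU) ?_ rfl
    · exact hU.trans ((Nat.sub_le _ _).trans (Nat.sub_le _ _))
    · rw [← hdeg, ← hk_eq, degBelow_relExp_of_subset hVsT hA.subset subset_rfl,
        degBelow_relExp_of_subset hVsT subset_rfl subset_rfl]
  rw [← hk_eq]
  refine eq_of_sum_powerset_neg_one_pow_card_smul_eq_zero hVs₀ hterm ?_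
  simp only [← map_zsmul, ← map_sum, ← mon_mul_relJ]
  exact Ideal.Quotient.eq_zero_iff_mem.2
    ((idealJ F).mul_mem_left _ (relJ_mem_idealJ (fun V hV => (hVs V hV).1) hdisj))

end Forest

end ForestRing

/-- Lemma 5.4.3: for a forest `F` on `S` and a monomial `y = ∏_{T ∈ F} y_T^{n_T}`,
the image `x = q_F(y) ∈ R_F` is zero iff `y ∉ N[F]`; and if `y ∈ N[F]`, its shape
is a `T`-tree and its degree is the maximal value `|T| − 2`, then `x = x_T^{|T|−2}`. -/
theorem stmt16 (S : Finset α) (F : Finset (Finset α)) (hF : IsForest S F)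
    (n : ↥F → ℕ) :
    (Ideal.Quotient.mk (idealJ F) (∏ T : ↥F, MvPolynomial.X T ^ n T) = 0 ↔
      ¬ ∀ T : ↥F,
        (∑ U ∈ Finset.univ.filter (fun U : ↥F => U.1 ⊆ T.1), n U) ≤ T.1.card - 2) ∧
    ∀ T : ↥F,
      (∀ T' : ↥F,
        (∑ U ∈ Finset.univ.filter (fun U : ↥F => U.1 ⊆ T'.1), n U) ≤ T'.1.card - 2) →
      1 ≤ n T →
      (∀ U : ↥F, 1 ≤ n U → U.1 ⊆ T.1) →
      (∑ U : ↥F, n U) = T.1.card - 2 →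
      Ideal.Quotient.mk (idealJ F) (∏ U : ↥F, MvPolynomial.X U ^ n U)
        = Ideal.Quotient.mk (idealJ F) (MvPolynomial.X T ^ (T.1.card - 2)) := by
  have hmon : ∏ T : ↥F, X T ^ n T = ForestRing.mon n := rfl
  refine ⟨⟨fun h hN => ?_, fun h => ?_⟩, fun T hN _ hsupp htot => ?_⟩
  · have h0 := ForestRing.coeffSumN_eq_zero_of_mem hF (Ideal.Quotient.eq_zero_iff_mem.1 h)
    rw [hmon, ForestRing.coeffSumN_mon, if_pos (show ForestRing.InN n from hN)] at h0
    exact one_ne_zero h0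
  · exact Ideal.Quotient.eq_zero_iff_mem.2 (ForestRing.mon_mem_idealJ_of_not_inN hF h)
  · exact ForestRing.mk_mon_eq_pow_of_inN hF T hN hsupp
      ((ForestRing.degBelow_eq_sum hsupp).trans htot)

end
end

section
/- The ideals I_S and J_S of ℤ_S are equal, where J_S replaces the connected-set relations of I_S by the relations (y_{U∪V} − y_U)(y_{U∪V} − y_V) for pairs of intersecting subsets; in particular ℤ_S/I_S = ℤ_S/J_S. -/
variable {α : Type*} [DecidableEq α]

/-- The index type of the polynomial ring `ℤ_S`: subsets of `S` of size at least 2. -/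
def Idx (S : Finset α) : Type _ := {T : Finset α // T ⊆ S ∧ 2 ≤ T.card}

instance (S : Finset α) : DecidableEq (Idx S) := by
  unfold Idx; infer_instance

noncomputable section

/-- The three families of generators common to `I_S` and `J_S`. -/
def commonRels (S : Finset α) : Set (MvPolynomial (Idx S) ℤ) :=
  {P | ∃ T : Idx S, T.1.card = 2 ∧ P = MvPolynomial.X T} ∪
  {P | ∃ T : Idx S, P = MvPolynomial.X T ^ (T.1.card - 1)} ∪
  {P | ∃ (T : Idx S) (Us : Finset (Idx S)), Us.Nonempty ∧
      (∀ U ∈ Us, U.1 ⊂ T.1) ∧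
      (∀ U ∈ Us, ∀ V ∈ Us, U ≠ V → U.1 ∩ V.1 = ∅) ∧
      P = MvPolynomial.X T ^ (T.1.card - 1 - ∑ U ∈ Us, (U.1.card - 1)) *
            ∏ U ∈ Us, (MvPolynomial.X T - MvPolynomial.X U)}

/-- The ideal `I_S ⊆ ℤ_S`, with the connected-set relations. -/
def idealIS (S : Finset α) : Ideal (MvPolynomial (Idx S) ℤ) :=
  Ideal.span (commonRels S ∪
    {P | ∃ (L : Finset (Idx S)) (W : Idx S), L.Nonempty ∧
      W.1 = (L.image fun U => U.1).sup id ∧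
      IsConnectedFam (L.image fun U => U.1) ∧
      P = ∏ U ∈ L, (MvPolynomial.X W - MvPolynomial.X U)})

/-- The ideal `J_S ⊆ ℤ_S`, with the relations
`(y_{U∪V} − y_U)(y_{U∪V} − y_V)` for intersecting pairs. -/
def idealJS (S : Finset α) : Ideal (MvPolynomial (Idx S) ℤ) :=
  Ideal.span (commonRels S ∪
    {P | ∃ U V W : Idx S, (U.1 ∩ V.1).Nonempty ∧ W.1 = U.1 ∪ V.1 ∧
      P = (MvPolynomial.X W - MvPolynomial.X U) *
            (MvPolynomial.X W - MvPolynomial.X V)})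


/-! A connected family with at least two members has two distinct intersecting members `U`, `V`.
Modulo `y_W - y_{U ∪ V}` the product `(y_W - y_U) (y_W - y_V)` is congruent to the pair relation
`(y_{U ∪ V} - y_U) (y_{U ∪ V} - y_V)`, so the connected-set relation of the family lies in `J_S`
once that of the family with `U`, `V` merged into `U ∪ V` does; this family is again connected,
has the same support and fewer members. Conversely, a pair relation is the connected-set relation
of the connected family `{U, V}`. -/

lemma Finset.prod_insert_dvd_mul_prod {ι M : Type*} [DecidableEq ι] [CommMonoid M] (a : ι)
    (s : Finset ι) (f : ι → M) : ∏ i ∈ insert a s, f i ∣ f a * ∏ i ∈ s, f i := by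
  rw [Finset.insert_eq, ← Finset.prod_singleton f a]
  exact Dvd.intro _ Finset.prod_union_inter

lemma sub_mul_sub_mul_mem {R : Type*} [CommRing R] {J : Ideal R} {a b u v r : R}
    (hb : (b - u) * (b - v) ∈ J) (hab : (a - b) * r ∈ J) : (a - u) * (a - v) * r ∈ J := by
  have key : (a - u) * (a - v) * r = (b - u) * (b - v) * r + (a - b) * r * (a - u + (b - v)) := by
    ring
  rw [key]
  exact add_mem (J.mul_mem_right _ hb) (J.mul_mem_right _ hab)

lemma Finset.sup_id_eq_of_forall_subset {L L' : Finset (Finset α)}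
    (hle : ∀ U' ∈ L', U' ⊆ L.sup id) (hsub : ∀ U ∈ L, ∃ U' ∈ L', U ⊆ U') :
    L'.sup id = L.sup id :=
  le_antisymm (Finset.sup_le hle) <| Finset.sup_le fun U hU =>
    let ⟨_, hU', hUU'⟩ := hsub U hU
    hUU'.trans (Finset.le_sup (f := id) hU')

namespace IsConnectedFam

lemma of_forall_mem {L : Finset (Finset α)} {x : α} (hx : ∀ U ∈ L, x ∈ U) :
    IsConnectedFam L := by
  rintro ⟨A, B, hAB, hdisj, ⟨a, ha⟩, ⟨b, hb⟩, hsplit⟩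
  obtain ⟨Ua, hUa, haU⟩ := Finset.mem_sup.mp (hAB ▸ Finset.mem_union_left B ha)
  obtain ⟨Ub, hUb, hbU⟩ := Finset.mem_sup.mp (hAB ▸ Finset.mem_union_right A hb)
  have hAB' := Finset.disjoint_left.mp (Finset.disjoint_iff_inter_eq_empty.mpr hdisj)
  -- `Ua` must lie in `A` and `Ub` in `B`, so their common point `x` lies in both.
  grind

lemma pair {U V : Finset α} (h : (U ∩ V).Nonempty) : IsConnectedFam {U, V} := by
  obtain ⟨x, hx⟩ := h
  rw [Finset.mem_inter] at hx
  exact of_forall_mem (x := x) (by simpa using hx)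

lemma of_forall_subset {L L' : Finset (Finset α)} (hL : IsConnectedFam L)
    (hle : ∀ U' ∈ L', U' ⊆ L.sup id) (hsub : ∀ U ∈ L, ∃ U' ∈ L', U ⊆ U') :
    IsConnectedFam L' := by
  rintro ⟨A, B, hAB, hdisj, hA, hB, hsplit⟩
  refine hL ⟨A, B, hAB.trans (Finset.sup_id_eq_of_forall_subset hle hsub), hdisj, hA, hB,
    fun U hU => ?_⟩
  obtain ⟨U', hU', hUU'⟩ := hsub U hU
  exact (hsplit U' hU').imp hUU'.trans hUU'.trans

lemma exists_ne_inter_nonempty {L : Finset (Finset α)} (hL : IsConnectedFam L)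
    (hne : ∀ U ∈ L, U.Nonempty) (hnt : L.Nontrivial) :
    ∃ U ∈ L, ∃ V ∈ L, U ≠ V ∧ (U ∩ V).Nonempty := by
  simp only [← Finset.not_disjoint_iff_nonempty_inter]
  by_contra! hdisj
  obtain ⟨U₀, hU₀, V₀, hV₀, hUV₀⟩ := hnt
  have hsub : ∀ U ∈ L, U ⊆ L.sup id := fun U hU => Finset.le_sup (f := id) hU
  refine hL ⟨U₀, L.sup id \ U₀, Finset.union_sdiff_of_subset (hsub U₀ hU₀),
    Finset.inter_sdiff_self _ _, hne U₀ hU₀, ?_, fun U hU => ?_⟩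
  · obtain ⟨x, hx⟩ := hne V₀ hV₀
    exact ⟨x, Finset.mem_sdiff.mpr ⟨hsub V₀ hV₀ hx,
      Finset.disjoint_left.mp (hdisj V₀ hV₀ U₀ hU₀ hUV₀.symm) hx⟩⟩
  · by_cases h : U = U₀
    · exact Or.inl h.le
    · exact Or.inr (Finset.subset_sdiff.mpr ⟨hsub U hU, hdisj U hU U₀ hU₀ h⟩)

end IsConnectedFam

namespace Idx

variable {S : Finset α}

def union (U V : Idx S) : Idx S :=
  ⟨U.1 ∪ V.1, Finset.union_subset U.2.1 V.2.1,
    U.2.2.trans (Finset.card_le_card Finset.subset_union_left)⟩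

def merge (L : Finset (Idx S)) (U V : Idx S) : Finset (Idx S) :=
  insert (U.union V) ((L.erase U).erase V)

variable {L : Finset (Idx S)} {U V : Idx S}

lemma card_merge_lt (hU : U ∈ L) (hV : V ∈ L) (hUV : U ≠ V) : (merge L U V).card < L.card := by
  have hV' : V ∈ L.erase U := Finset.mem_erase.mpr ⟨hUV.symm, hV⟩
  have h₁ := Finset.card_insert_le (U.union V) ((L.erase U).erase V)
  have h₂ := Finset.card_erase_of_mem hV'
  have h₃ := Finset.card_erase_of_mem hU
  have h₄ := Finset.card_pos.mpr ⟨V, hV'⟩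
  unfold merge
  omega

lemma subset_sup_of_mem_merge (hU : U ∈ L) (hV : V ∈ L) :
    ∀ T ∈ (merge L U V).image (fun T => T.1), T ⊆ (L.image fun T => T.1).sup id := by
  have hsub : ∀ T ∈ L, T.1 ⊆ (L.image fun T => T.1).sup id := fun T hT =>
    Finset.le_sup (f := id) (Finset.mem_image_of_mem _ hT)
  simp only [Finset.forall_mem_image]
  intro T hT
  rcases Finset.mem_insert.mp hT with rfl | hT
  · exact Finset.union_subset (hsub U hU) (hsub V hV)
  · exact hsub T (Finset.mem_of_mem_erase (Finset.mem_of_mem_erase hT))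

lemma exists_superset_mem_merge :
    ∀ T ∈ L.image (fun T => T.1), ∃ T' ∈ (merge L U V).image (fun T => T.1), T ⊆ T' := by
  simp only [Finset.forall_mem_image, Finset.exists_mem_image]
  intro T hT
  by_cases hTU : T = U
  · exact ⟨U.union V, Finset.mem_insert_self _ _, hTU ▸ Finset.subset_union_left⟩
  by_cases hTV : T = V
  · exact ⟨U.union V, Finset.mem_insert_self _ _, hTV ▸ Finset.subset_union_right⟩
  exact ⟨T, Finset.mem_insert_of_mem (Finset.mem_erase.mpr ⟨hTV, Finset.mem_erase.mpr ⟨hTU, hT⟩⟩),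
    le_rfl⟩

end Idx

theorem prod_sub_mem_of_isConnectedFam {R : Type*} [CommRing R] {S : Finset α} {J : Ideal R}
    (y : Idx S → R)
    (hJ : ∀ U V : Idx S, (U.1 ∩ V.1).Nonempty → (y (U.union V) - y U) * (y (U.union V) - y V) ∈ J)
    {L : Finset (Idx S)} (hL : L.Nonempty) {W : Idx S} (hW : W.1 = (L.image fun U => U.1).sup id)
    (hconn : IsConnectedFam (L.image fun U => U.1)) : ∏ U ∈ L, (y W - y U) ∈ J := by
  induction hn : L.card using Nat.strong_induction_on generalizing L with
  | _ n ih =>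
  rcases hL.exists_eq_singleton_or_nontrivial with ⟨U, rfl⟩ | hnt
  · have hWU : W = U := Subtype.ext (by simpa using hW)
    simp [hWU]
  obtain ⟨U', hU', V', hV', hUV', hint⟩ :=
    hconn.exists_ne_inter_nonempty (Finset.forall_mem_image.mpr fun T _ => Finset.card_pos.mp (two_pos.trans_le T.2.2))
      (hnt.image_of_injOn Subtype.val_injective.injOn)
  obtain ⟨U, hU, rfl⟩ := Finset.mem_image.mp hU'
  obtain ⟨V, hV, rfl⟩ := Finset.mem_image.mp hV'
  have hUV : U ≠ V := fun h => hUV' (congrArg _ h)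
  have hsup := Finset.sup_id_eq_of_forall_subset (Idx.subset_sup_of_mem_merge hU hV)
    Idx.exists_superset_mem_merge
  have hmerge := ih _ (hn ▸ Idx.card_merge_lt hU hV hUV) ⟨_, Finset.mem_insert_self _ _⟩
    (hW.trans hsup.symm)
    (hconn.of_forall_subset (Idx.subset_sup_of_mem_merge hU hV) Idx.exists_superset_mem_merge)
    rfl
  have hV' : V ∈ L.erase U := Finset.mem_erase.mpr ⟨hUV.symm, hV⟩
  rw [← Finset.mul_prod_erase L _ hU, ← Finset.mul_prod_erase (L.erase U) _ hV', ← mul_assoc]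
  exact sub_mul_sub_mul_mem (hJ U V hint)
    (J.mem_of_dvd (Finset.prod_insert_dvd_mul_prod _ _ _) hmerge)

theorem idealIS_le_idealJS (S : Finset α) : idealIS S ≤ idealJS S := by
  refine Ideal.span_le.mpr ?_
  rintro P (hP | ⟨L, W, hL, hW, hconn, rfl⟩)
  · exact Ideal.subset_span (Or.inl hP)
  · exact prod_sub_mem_of_isConnectedFam MvPolynomial.X
      (fun U V h => Ideal.subset_span (Or.inr ⟨U, V, U.union V, h, rfl, rfl⟩)) hL hW hconn

theorem idealJS_le_idealIS (S : Finset α) : idealJS S ≤ idealIS S := by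
  refine Ideal.span_le.mpr ?_
  rintro P (hP | ⟨U, V, W, hUV, hW, rfl⟩)
  · exact Ideal.subset_span (Or.inl hP)
  · have hpair : ∏ T ∈ {U, V}, (MvPolynomial.X W - MvPolynomial.X T) ∈ idealIS S :=
      Ideal.subset_span (Or.inr ⟨{U, V}, W, Finset.insert_nonempty _ _, by simp [hW],
        by simpa using IsConnectedFam.pair hUV, rfl⟩)
    simpa using (idealIS S).mem_of_dvd (Finset.prod_insert_dvd_mul_prod U {V} _) hpair

/-- Corollary 9.6.4: `I_S = J_S`, hence `ℤ_S/I_S = ℤ_S/J_S`. -/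
theorem stmt19 (S : Finset α) : idealIS S = idealJS S :=
  le_antisymm (idealIS_le_idealJS S) (idealJS_le_idealIS S)

end
end
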